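/- arXiv:1506.01569 — 7 statements merged into one kernel-verified Lean document; each statement's English description precedes it below -/
import Mathlib

section
/- Let Ω ⊂ ℂⁿ be a bounded domain with C² boundary, let p ∈ ∂Ω, and let f : Ω → Ω be holomorphic, extending to a C¹ map on a neighborhood of p in the closure of Ω with f(p) = p. Then the real differential df_p maps the real tangent space T_p(∂Ω) into itself, and the complex Jacobian J_f(p) maps the complex tangent space T_p^{(1,0)}(∂Ω) into itself. -/
open Metric Set Filter

noncomputable section

/-- The Levi form of a real-valued `C²` function `ρ` on `ℂⁿ` at the point `q`
in the direction `v`:  `L_ρ(q,v) = Σ_{j,k} (∂²ρ/∂z_j∂z̄_k)(q) v_j v̄_k`, expressed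
invariantly as `(Hess ρ(q)(v,v) + Hess ρ(q)(iv,iv))/4`. -/
def LeviForm {n : ℕ} (ρ : EuclideanSpace ℂ (Fin n) → ℝ)
    (q v : EuclideanSpace ℂ (Fin n)) : ℝ :=
  (iteratedFDeriv ℝ 2 ρ q ![v, v]
    + iteratedFDeriv ℝ 2 ρ q ![Complex.I • v, Complex.I • v]) / 4

/-!
Since `f` maps `Ω = {ρ < 0}` into itself and fixes `p`, we have `ρ ∘ f < 0 = (ρ ∘ f)(p)`
on `Ω`, so `ρ ∘ f` has a maximum on `Ω` at `p`. By Fermat's rule its differential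
`dρ_p ∘ df_p` is nonpositive on the positive tangent cone of `Ω` at `p`, which contains the
open half-space `{dρ_p < 0}`; a linear functional that is nonpositive on that half-space
vanishes on `ker dρ_p = T_p(∂Ω)`. Complex linearity of `J_f(p)` then upgrades invariance of
the real hyperplane `T_p(∂Ω)` to invariance of the complex hyperplane
`T_p^{(1,0)}(∂Ω) = T_p(∂Ω) ∩ i T_p(∂Ω)`.
-/

theorem LinearMap.ker_le_ker_of_neg_imp_nonpos {𝕜 E : Type*} [Field 𝕜] [LinearOrder 𝕜]
    [IsStrictOrderedRing 𝕜] [AddCommGroup E] [Module 𝕜 E] {a b : E →ₗ[𝕜] 𝕜} (ha : a ≠ 0)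
    (h : ∀ x, a x < 0 → b x ≤ 0) : LinearMap.ker a ≤ LinearMap.ker b := by
  intro v hv
  rw [LinearMap.mem_ker] at hv ⊢
  by_contra hbv
  obtain ⟨w, hw⟩ := DFunLike.ne_iff.1 ha
  -- the vector `x` below has `a x = -(a w)²` and `b x = 1`
  have hx := h (-(a w) • w + ((1 + a w * b w) / b v) • v)
  simp only [map_add, map_smul, smul_eq_mul, hv, mul_zero, add_zero] at hx
  rw [div_mul_cancel₀ _ hbv] at hx
  have haw : 0 < a w * a w := mul_self_pos.2 (by simpa using hw)
  linarith [hx (by linarith)]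

section SublevelSet

variable {E : Type*} [NormedAddCommGroup E] [NormedSpace ℝ E] {g : E → ℝ} {g' : StrongDual ℝ E}
  {p : E}

theorem mem_posTangentConeAt_setOf_lt_zero (hg : HasFDerivAt g g' p) (hgp : g p = 0) {v : E}
    (hv : g' v < 0) : v ∈ posTangentConeAt {z | g z < 0} p := by
  have hline : HasDerivAt (fun t : ℝ => g (p + t • v)) (g' v) 0 := by
    have h := hg.comp_hasDerivAt_of_eq 0 (((hasDerivAt_id' 0).smul_const v).const_add p)
      (by simp)
    rwa [one_smul] at h
  apply mem_posTangentConeAt_of_frequently_mem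
  refine Eventually.frequently ?_
  filter_upwards [hline.tendsto_slope_zero_right.eventually (gt_mem_nhds hv),
    self_mem_nhdsWithin] with t hslope (ht : 0 < t)
  simpa [hgp, ht.ne', smul_eq_mul, inv_mul_lt_iff₀ ht] using hslope

theorem HasFDerivWithinAt.mapsTo_ker_of_mapsTo_setOf_lt_zero {F : E → E} {F' : E →L[ℝ] E}
    (hF : HasFDerivWithinAt F F' {z | g z < 0} p) (hg : HasFDerivAt g g' p) (hgp : g p = 0)
    (hg' : g' ≠ 0) (hFp : F p = p) (hmaps : MapsTo F {z | g z < 0} {z | g z < 0}) :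
    MapsTo F' {v | g' v = 0} {v | g' v = 0} := by
  have hmax : IsLocalMaxOn (g ∘ F) {z | g z < 0} p :=
    eventually_mem_nhdsWithin.mono fun z hz => by
      simpa [hFp, hgp] using (hmaps hz).le
  have hcomp : HasFDerivWithinAt (g ∘ F) (g'.comp F') {z | g z < 0} p :=
    (hFp ▸ hg).comp_hasFDerivWithinAt p hF
  intro v hv
  refine LinearMap.ker_le_ker_of_neg_imp_nonpos (a := (g' : E →ₗ[ℝ] ℝ))
    (b := ((g'.comp F' : E →L[ℝ] ℝ) : E →ₗ[ℝ] ℝ)) ?_ (fun x hx => ?_) hv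
  · exact fun h => hg' (ContinuousLinearMap.coe_injective h)
  · exact hmax.hasFDerivWithinAt_nonpos hcomp (mem_posTangentConeAt_setOf_lt_zero hg hgp hx)

end SublevelSet

theorem LinearMap.inner_apply_eq_zero_of_re_inner_apply_eq_zero {E : Type*}
    [NormedAddCommGroup E] [InnerProductSpace ℂ E] (A : E →ₗ[ℂ] E) {ν : E}
    (hA : ∀ v, (inner ℂ ν v).re = 0 → (inner ℂ ν (A v)).re = 0) {v : E} (hv : inner ℂ ν v = 0) :
    inner ℂ ν (A v) = 0 := by
  have hIv := hA (Complex.I • v) (by simp [hv])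
  rw [map_smul, inner_smul_right, Complex.mul_re] at hIv
  apply Complex.ext
  · exact hA v (by simp [hv])
  · simpa using hIv

theorem boundary_tangent_space_invariance_general
    {n : ℕ}
    (Ω : Set (EuclideanSpace ℂ (Fin n)))
    -- `C²` defining function for `Ω`
    (ρ : EuclideanSpace ℂ (Fin n) → ℝ) (hρC2 : ContDiff ℝ 2 ρ)
    (hρΩ : Ω = {z | ρ z < 0}) (hρfr : frontier Ω = {z | ρ z = 0})
    (hρgrad : ∀ q ∈ frontier Ω, fderiv ℝ ρ q ≠ 0)
    -- the boundary point `p` and the unit outward normal `ν = ∇ρ(p)/|∇ρ(p)|`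
    (p : EuclideanSpace ℂ (Fin n)) (hp : p ∈ frontier Ω)
    (ν : EuclideanSpace ℂ (Fin n))
    (hν : ∃ c : ℝ, 0 < c ∧ ∀ v, fderiv ℝ ρ p v = c * (inner ℂ v ν : ℂ).re)
    -- the holomorphic self-map `f`, C¹ up to the boundary near `p`, fixing `p`
    (f : EuclideanSpace ℂ (Fin n) → EuclideanSpace ℂ (Fin n))
    (hfself : MapsTo f Ω Ω)
    (hfp : f p = p)
    -- `A` is the (ℂ-linear) Jacobian `J_f(p)` of `f` at `p`; its scalar
    -- restriction is the real differential `df_p`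
    (A : EuclideanSpace ℂ (Fin n) →L[ℂ] EuclideanSpace ℂ (Fin n))
    (hA : HasFDerivWithinAt f (A.restrictScalars ℝ) (closure Ω) p) :
    (∀ v : EuclideanSpace ℂ (Fin n),
      (inner ℂ ν v : ℂ).re = 0 → (inner ℂ ν (A.restrictScalars ℝ v) : ℂ).re = 0) ∧
    (∀ v : EuclideanSpace ℂ (Fin n), (inner ℂ ν v : ℂ) = 0 → (inner ℂ ν (A v) : ℂ) = 0) := by
  obtain ⟨c, hc, hρν⟩ := hν
  have hρp : ρ p = 0 := by rwa [hρfr] at hp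
  have hker : ∀ w, fderiv ℝ ρ p w = 0 ↔ (inner ℂ ν w).re = 0 := fun w => by
    rw [hρν, ← inner_conj_symm, Complex.conj_re, mul_eq_zero, or_iff_right hc.ne']
  subst hρΩ
  have hT := (hA.mono subset_closure).mapsTo_ker_of_mapsTo_setOf_lt_zero
    ((hρC2.differentiable two_ne_zero p).hasFDerivAt) hρp (hρgrad p hp) hfp hfself
  have hreal : ∀ v, (inner ℂ ν v).re = 0 → (inner ℂ ν (A v)).re = 0 := fun v hv =>
    (hker _).1 (hT ((hker v).2 hv))
  exact ⟨hreal, fun v hv => A.toLinearMap.inner_apply_eq_zero_of_re_inner_apply_eq_zero hreal hv⟩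

/-- **Invariance of the tangent spaces.**  Let `Ω ⊂ ℂⁿ` be a bounded domain with
`C²` boundary, `p ∈ ∂Ω`, and `f : Ω → Ω` holomorphic, extending to a `C¹` map on a
neighborhood of `p` in the closure of `Ω` with `f(p) = p`.  Then the real
differential `df_p` maps `T_p(∂Ω) = {v : Re⟨v, ν_p⟩ = 0}` into itself and the
complex Jacobian `J_f(p)` maps `T_p^{(1,0)}(∂Ω) = {v : ⟨v, ν_p⟩ = 0}` into
itself. -/
theorem boundary_tangent_space_invariance
    {n : ℕ} (hn : 1 ≤ n)
    (Ω : Set (EuclideanSpace ℂ (Fin n))) (hΩopen : IsOpen Ω)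
    (hΩconn : IsConnected Ω) (hΩbd : Bornology.IsBounded Ω)
    -- `C²` defining function for `Ω`
    (ρ : EuclideanSpace ℂ (Fin n) → ℝ) (hρC2 : ContDiff ℝ 2 ρ)
    (hρΩ : Ω = {z | ρ z < 0}) (hρfr : frontier Ω = {z | ρ z = 0})
    (hρgrad : ∀ q ∈ frontier Ω, fderiv ℝ ρ q ≠ 0)
    -- the boundary point `p` and the unit outward normal `ν = ∇ρ(p)/|∇ρ(p)|`
    (p : EuclideanSpace ℂ (Fin n)) (hp : p ∈ frontier Ω)
    (ν : EuclideanSpace ℂ (Fin n)) (hν1 : ‖ν‖ = 1)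
    (hν : ∃ c : ℝ, 0 < c ∧ ∀ v, fderiv ℝ ρ p v = c * (inner ℂ v ν : ℂ).re)
    -- the holomorphic self-map `f`, C¹ up to the boundary near `p`, fixing `p`
    (f : EuclideanSpace ℂ (Fin n) → EuclideanSpace ℂ (Fin n))
    (hf : DifferentiableOn ℂ f Ω) (hfself : MapsTo f Ω Ω)
    (U : Set (EuclideanSpace ℂ (Fin n))) (hUopen : IsOpen U) (hpU : p ∈ U)
    (hfC1 : ContDiffOn ℝ 1 f (closure Ω ∩ U)) (hfp : f p = p)
    -- `A` is the (ℂ-linear) Jacobian `J_f(p)` of `f` at `p`; its scalar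
    -- restriction is the real differential `df_p`
    (A : EuclideanSpace ℂ (Fin n) →L[ℂ] EuclideanSpace ℂ (Fin n))
    (hA : HasFDerivWithinAt f (A.restrictScalars ℝ) (closure Ω) p) :
    (∀ v : EuclideanSpace ℂ (Fin n),
      (inner ℂ ν v : ℂ).re = 0 → (inner ℂ ν (A.restrictScalars ℝ v) : ℂ).re = 0) ∧
    (∀ v : EuclideanSpace ℂ (Fin n), (inner ℂ ν v : ℂ) = 0 → (inner ℂ ν (A v) : ℂ) = 0) :=
  boundary_tangent_space_invariance_general Ω ρ hρC2 hρΩ hρfr hρgrad p hp ν hν f hfself hfp A hA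
end
end

section
/- Let Ω ⊂ ℂⁿ be a bounded strongly pseudoconvex domain with C² boundary whose defining function ρ is strictly plurisubharmonic on a neighborhood of the closure of Ω, let p ∈ ∂Ω, and let f : Ω → Ω be holomorphic, extending to a C² map on a neighborhood of p in the closure of Ω with f(p) = p. Then the directional derivative of ρ ∘ f at p along the unit outward normal ν_p is strictly positive: dρ_p(df_p(ν_p)) > 0; equivalently, Re⟨J_f(p)ν_p, ν_p⟩ > 0. -/
open Metric Set Filter

noncomputable section

/-! Let `P` be the Levi polynomial of `ρ` at `p`, so that
`ρ (p + w) = ρ p + re P(w) + L_ρ(p, w) + o(|w|²)`. Strict plurisubharmonicity gives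
`re P(w) ≤ ρ (p + w)` for small `w`, so `G = P ∘ (f - p)` is holomorphic with negative real part on
small balls inside `Ω` tangent to `∂Ω` at `p`, and `G p = 0`. On the complex normal disc through
`p`, the Schwarz lemma for the Cayley transform of `G` is a Harnack inequality bounding
`re G (p - t ν) ≤ -κ t` with `κ > 0`, so the outward normal derivative of `re G` at `p`, which is
`dρ_p (J_f(p) ν)`, is positive. -/

open Topology Asymptotics ComplexConjugate
open Complex (I)

namespace Complex

lemma norm_sub_lt_norm_add_conj {w m : ℂ} (hw : w.re < 0) (hm : m.re < 0) :
    ‖w - m‖ < ‖w + conj m‖ := by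
  rw [← sq_lt_sq₀ (norm_nonneg _) (norm_nonneg _), ← normSq_eq_norm_sq, ← normSq_eq_norm_sq]
  simp only [normSq_apply, sub_re, sub_im, add_re, add_im, conj_re, conj_im]
  nlinarith [mul_pos_of_neg_of_neg hw hm]

/-- Inverting the Cayley transform `w ↦ (w - m) / (w + conj m)` of the left half-plane. -/
lemma re_le_of_norm_sub_le_mul {w m : ℂ} {k : ℝ} (hw : w.re < 0) (hm : m.re < 0)
    (hk₀ : 0 ≤ k) (hk₁ : k ≤ 1) (h : ‖w - m‖ ≤ k * ‖w + conj m‖) :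
    w.re ≤ (1 - k) * m.re / 4 := by
  have hsq : normSq (w - m) ≤ k ^ 2 * normSq (w + conj m) := by
    rw [normSq_eq_norm_sq, normSq_eq_norm_sq, ← mul_pow]
    exact pow_le_pow_left₀ (norm_nonneg _) h 2
  simp only [normSq_apply, sub_re, sub_im, add_re, add_im, conj_re, conj_im] at hsq
  set X := (w.re + m.re) ^ 2 + (w.im - m.im) ^ 2
  have hX : (1 - k ^ 2) * X ≤ 4 * w.re * m.re := by nlinarith
  have hXm : m.re ^ 2 ≤ X := by nlinarith [sq_nonneg (w.im - m.im)]
  have : (1 - k) * m.re ^ 2 ≤ 4 * w.re * m.re := by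
    nlinarith [mul_le_mul_of_nonneg_left hXm (by nlinarith : (0:ℝ) ≤ 1 - k ^ 2),
      mul_nonneg (mul_nonneg hk₀ (sub_nonneg.2 hk₁)) (sq_nonneg m.re)]
  nlinarith

/-- A Harnack inequality: the Schwarz lemma for the Cayley transform of `H` centred at `c`. -/
theorem re_le_of_forall_re_neg_on_ball {E : Type*} [NormedAddCommGroup E] [NormedSpace ℂ E]
    {H : E → ℂ} {c z : E} {R : ℝ} (hH : DifferentiableOn ℂ H (ball c R))
    (hneg : ∀ ζ ∈ ball c R, (H ζ).re < 0) (hz : z ∈ ball c R) :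
    (H z).re ≤ (1 - dist z c / R) * (H c).re / 4 := by
  have hR : 0 < R := pos_of_mem_ball hz
  set m := H c
  have hm : m.re < 0 := hneg c (mem_ball_self hR)
  have hden : ∀ ζ ∈ ball c R, H ζ + conj m ≠ 0 := fun ζ hζ h0 => by
    have := congrArg re h0
    simp only [add_re, conj_re, zero_re] at this
    linarith [hneg ζ hζ]
  set g : E → ℂ := fun ζ => (H ζ - m) * (H ζ + conj m)⁻¹
  have hgc : g c = 0 := by simp [g, m]
  have hg : DifferentiableOn ℂ g (ball c R) :=
    (hH.sub_const m).mul ((hH.add_const (conj m)).inv hden)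
  have hmaps : MapsTo g (ball c R) (closedBall (g c) 1) := fun ζ hζ => by
    rw [hgc, mem_closedBall_zero_iff]
    simp only [g, ← div_eq_mul_inv]
    rw [norm_div, div_le_one (norm_pos_iff.2 (hden ζ hζ))]
    exact (norm_sub_lt_norm_add_conj (hneg ζ hζ) hm).le
  have hschwarz := dist_le_div_mul_dist_of_mapsTo_ball hg hmaps hz
  rw [hgc, dist_zero_right] at hschwarz
  simp only [g, ← div_eq_mul_inv] at hschwarz
  rw [norm_div, div_le_iff₀ (norm_pos_iff.2 (hden z hz)),
    one_div_mul_eq_div] at hschwarz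
  exact re_le_of_norm_sub_le_mul (hneg z hz) hm (div_nonneg dist_nonneg hR.le)
    ((div_lt_one hR).2 (mem_ball.1 hz)).le hschwarz

end Complex

lemma HasDerivWithinAt.le_of_eventually_le_add_mul {φ : ℝ → ℝ} {d K x : ℝ}
    (hφ : HasDerivWithinAt φ d (Ioi x) x) (hle : ∀ᶠ t in 𝓝[>] x, φ t ≤ φ x + K * (t - x)) :
    d ≤ K := by
  rw [hasDerivWithinAt_iff_tendsto_slope, sdiff_singleton_eq_self self_notMem_Ioi] at hφ
  refine le_of_tendsto hφ ?_
  filter_upwards [hle, self_mem_nhdsWithin] with t ht (htx : x < t)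
  rw [slope_def_field, div_le_iff₀ (sub_pos.2 htx)]
  linarith

/-- Hopf's lemma for holomorphic functions: along the disc `ζ ↦ p - ζ • ν` the Harnack inequality
gives `re G (p - t • ν) ≤ -κ t` with `κ > 0`. -/
theorem HasFDerivWithinAt.re_apply_pos_of_re_neg {E : Type*} [NormedAddCommGroup E]
    [NormedSpace ℂ E] {G : E → ℂ} {L : E →L[ℝ] ℂ} {p ν : E} {r : ℝ} (hν : ‖ν‖ = 1) (hr : 0 < r)
    (hL : HasFDerivWithinAt G L (ball (p - r • ν) r) p)
    (hG : DifferentiableOn ℂ G (ball (p - r • ν) r))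
    (hneg : ∀ z ∈ ball (p - r • ν) r, (G z).re < 0) (hGp : G p = 0) :
    0 < (L ν).re := by
  have hdisc : ∀ ζ : ℂ, dist (p - ζ • ν) (p - r • ν) = dist ζ r := fun ζ => by
    rw [dist_eq_norm, dist_eq_norm, ← Complex.coe_smul, sub_sub_sub_cancel_left, ← sub_smul,
      norm_smul, hν, mul_one, norm_sub_rev]
  have hmaps : MapsTo (fun ζ : ℂ => p - ζ • ν) (ball (r : ℂ) r) (ball (p - r • ν) r) :=
    fun ζ hζ => by rwa [mem_ball, hdisc]
  have ha : (G (p - r • ν)).re < 0 := hneg _ (mem_ball_self hr)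
  have hharnack : ∀ t ∈ Ioo 0 r, (G (p - t • ν)).re ≤ (G (p - r • ν)).re / (4 * r) * t := by
    intro t ht
    have htr : dist (t : ℂ) r = r - t := by
      rw [Complex.dist_eq, ← Complex.ofReal_sub, Complex.norm_real, Real.norm_of_nonpos] <;>
        linarith [ht.2]
    have := Complex.re_le_of_forall_re_neg_on_ball (hG.comp (by fun_prop) hmaps)
      (fun ζ hζ => hneg _ (hmaps hζ)) (z := (t : ℂ)) (by rw [mem_ball, htr]; linarith [ht.1])
    simp only [Function.comp_apply, Complex.coe_smul, htr] at this
    convert this using 1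
    field_simp
    ring
  have hpath : HasDerivWithinAt (fun t : ℝ => (G (p - t • ν)).re) (L (-ν)).re (Ioi 0) 0 := by
    have hψ : HasDerivAt (fun t : ℝ => p - t • ν) (-ν) 0 := by
      simpa using ((hasDerivAt_id (0 : ℝ)).smul_const ν).const_sub p
    have hGre := Complex.reCLM.hasFDerivAt.comp_hasFDerivWithinAt p hL
    refine HasDerivWithinAt.Ioi_of_Ioo hr ?_
    refine hGre.comp_hasDerivWithinAt_of_eq 0 hψ.hasDerivWithinAt (fun t ht => ?_) (by simp)
    rw [mem_ball, ← Complex.coe_smul, hdisc, Complex.dist_eq, ← Complex.ofReal_sub,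
      Complex.norm_real, Real.norm_eq_abs, abs_lt]
    constructor <;> linarith [ht.1, ht.2]
  have hslope := hpath.le_of_eventually_le_add_mul (K := (G (p - r • ν)).re / (4 * r)) <| by
    filter_upwards [Ioo_mem_nhdsGT hr] with t ht
    simpa [hGp] using hharnack t ht
  rw [map_neg, Complex.neg_re] at hslope
  have : (G (p - r • ν)).re / (4 * r) < 0 := div_neg_of_neg_of_pos ha (by positivity)
  linarith

theorem ContDiff.isLittleO_taylor_two {E F : Type*} [NormedAddCommGroup E] [NormedSpace ℝ E]
    [NormedAddCommGroup F] [NormedSpace ℝ F] {f : E → F} (hf : ContDiff ℝ 2 f) (x : E) :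
    (fun h => f (x + h) - f x - fderiv ℝ f x h - (2 : ℝ)⁻¹ • fderiv ℝ (fderiv ℝ f) x h h)
      =o[𝓝 0] fun h => ‖h‖ ^ 2 := by
  set B := fderiv ℝ (fderiv ℝ f) x
  have hf' : ∀ y, HasFDerivAt f (fderiv ℝ f y) y := fun y =>
    (hf.differentiable (by norm_num) y).hasFDerivAt
  have hB : HasFDerivAt (fderiv ℝ f) B x :=
    ((hf.fderiv_right (m := 1) (by norm_num)).differentiable one_ne_zero x).hasFDerivAt
  have hsymm : ∀ v w, B v w = B w v := (hf.contDiffAt.isSymmSndFDerivAt (by simp))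
  have hderiv : ∀ h, HasFDerivAt
      (fun h => f (x + h) - fderiv ℝ f x h - (2 : ℝ)⁻¹ • B h h)
      (fderiv ℝ f (x + h) - fderiv ℝ f x - B h) h := fun h => by
    have hq := (B.hasFDerivAt_of_bilinear (hasFDerivAt_id h) (hasFDerivAt_id h)).const_smul
      (2 : ℝ)⁻¹
    refine (((hf' (x + h)).comp h ((hasFDerivAt_id h).const_add x)).sub
      (fderiv ℝ f x).hasFDerivAt |>.sub hq).congr_fderiv ?_
    ext v
    simp only [ContinuousLinearMap.comp_id, id_eq, ContinuousLinearMap.precompR_apply,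
      ContinuousLinearMap.compL_apply, smul_add, sub_apply, add_apply, smul_apply,
      ContinuousLinearMap.precompL_apply, ContinuousLinearMap.id_apply, hsymm v h]
    module
  have hlin : (fun h => fderiv ℝ f (x + h) - fderiv ℝ f x - B h) =o[𝓝[univ] 0]
      fun h => ‖h - 0‖ ^ 1 := by
    simpa using (hasFDerivAt_iff_isLittleO_nhds_zero.1 hB).norm_right
  have := convex_univ.isLittleO_pow_succ (mem_univ 0) (fun h _ => (hderiv h).hasFDerivWithinAt)
    hlin
  simp only [nhdsWithin_univ, sub_zero, add_zero, map_zero, smul_zero] at this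
  refine this.congr_left fun h => ?_
  abel

theorem ContDiff.isBigO_sub_sub_fderiv {E F : Type*} [NormedAddCommGroup E] [NormedSpace ℝ E]
    [NormedAddCommGroup F] [NormedSpace ℝ F] {f : E → F} (hf : ContDiff ℝ 2 f) (x : E) :
    (fun h => f (x + h) - f x - fderiv ℝ f x h) =O[𝓝 0] fun h => ‖h‖ ^ 2 := by
  have hquad : (fun h => fderiv ℝ (fderiv ℝ f) x h h) =O[𝓝 0] fun h => ‖h‖ ^ 2 :=
    .of_bound ‖fderiv ℝ (fderiv ℝ f) x‖ <| .of_forall fun h => by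
      simpa [sq, mul_assoc] using (fderiv ℝ (fderiv ℝ f) x).le_opNorm₂ h h
  refine ((hf.isLittleO_taylor_two x).isBigO.add (hquad.const_smul_left (2 : ℝ)⁻¹)).congr_left
    fun h => ?_
  simp only [Pi.smul_apply]
  abel

theorem exists_pos_mul_norm_sq_le {E : Type*} [NormedAddCommGroup E] [NormedSpace ℝ E]
    [ProperSpace E] {q : E → ℝ} (hq : Continuous q) (hhom : ∀ (t : ℝ) v, q (t • v) = t ^ 2 * q v)
    (hpos : ∀ v ≠ 0, 0 < q v) : ∃ δ > 0, ∀ v, δ * ‖v‖ ^ 2 ≤ q v := by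
  rcases subsingleton_or_nontrivial E with hE | hE
  · refine ⟨1, one_pos, fun v => ?_⟩
    have h0 := hhom 0 0
    simp only [zero_smul, ne_eq, OfNat.ofNat_ne_zero, not_false_eq_true, zero_pow, zero_mul] at h0
    simp [Subsingleton.elim v 0, h0]
  obtain ⟨u₀, hu₀, hmin⟩ := (isCompact_sphere (0 : E) 1).exists_isMinOn
    (NormedSpace.sphere_nonempty.2 zero_le_one) hq.continuousOn
  refine ⟨q u₀, hpos u₀ (ne_zero_of_mem_unit_sphere ⟨u₀, hu₀⟩), fun v => ?_⟩
  rcases eq_or_ne v 0 with rfl | hv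
  · simpa using (hhom 0 0).ge
  have hu : ‖v‖⁻¹ • v ∈ sphere (0 : E) 1 := by
    simp [norm_smul, inv_mul_cancel₀ (norm_ne_zero_iff.2 hv)]
  calc q u₀ * ‖v‖ ^ 2 ≤ q (‖v‖⁻¹ • v) * ‖v‖ ^ 2 := by gcongr; exact hmin hu
    _ = q v := by
      rw [hhom]
      field_simp

theorem eventually_ball_sub_smul_subset {E : Type*} [SeminormedAddCommGroup E] [NormedSpace ℝ E]
    {p ν : E} (hν : ‖ν‖ = 1) {U : Set E} (hU : U ∈ 𝓝 p) :
    ∀ᶠ r in 𝓝[>] (0 : ℝ), ball (p - r • ν) r ⊆ U := by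
  obtain ⟨ε, hε, hεU⟩ := Metric.mem_nhds_iff.1 hU
  filter_upwards [Ioo_mem_nhdsGT (half_pos hε)] with r hr
  refine (ball_subset_ball' ?_).trans hεU
  rw [dist_eq_norm, sub_sub_cancel_left, norm_neg, norm_smul, hν, mul_one,
    Real.norm_of_nonneg hr.1.le]
  linarith [hr.2]

theorem eventually_ball_sub_smul_subset_of_isBigO {E : Type*} [NormedAddCommGroup E]
    [InnerProductSpace ℂ E] {g : E → ℝ} {p ν : E} {c : ℝ} (hν : ‖ν‖ = 1) (hc : 0 < c)
    (hg : (fun h => g (p + h) - c * (inner ℂ h ν).re) =O[𝓝 0] fun h => ‖h‖ ^ 2) :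
    ∀ᶠ r in 𝓝[>] 0, ball (p - r • ν) r ⊆ {z | g z < 0} := by
  obtain ⟨M, hM⟩ := hg.bound
  obtain ⟨ε, hε, hεM⟩ := Metric.eventually_nhds_iff.1 hM
  have hsmall : ∀ᶠ r in 𝓝 (0 : ℝ), 2 * r * M < c :=
    Tendsto.eventually_lt_const (by simpa using hc)
      ((continuous_const.mul continuous_id).mul continuous_const).continuousAt.tendsto
  filter_upwards [Ioo_mem_nhdsGT (half_pos hε), nhdsWithin_le_nhds hsmall] with r hr hrM
  intro z hz
  set h := z - p
  have hball : ‖h‖ ^ 2 + 2 * r * (inner ℂ h ν).re < 0 := by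
    have hz' : ‖h + r • ν‖ ^ 2 < r ^ 2 := by
      rw [mem_ball, dist_eq_norm, sub_sub_eq_add_sub, add_sub_right_comm] at hz
      exact pow_lt_pow_left₀ hz (norm_nonneg _) two_ne_zero
    rw [norm_add_sq (𝕜 := ℂ), norm_smul, hν, Real.norm_of_nonneg hr.1.le, ← Complex.coe_smul,
      inner_smul_right] at hz'
    simp only [Complex.re_ofReal_mul, RCLike.re_to_complex] at hz'
    nlinarith
  have hh : ‖h‖ < ε := by
    calc ‖h‖ ≤ ‖z - (p - r • ν)‖ + ‖p - r • ν - p‖ := norm_sub_le_norm_sub_add_norm_sub _ _ _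
      _ < r + r := by
        rw [← dist_eq_norm, sub_sub_cancel_left, norm_neg, norm_smul, hν,
          Real.norm_of_nonneg hr.1.le, mul_one]
        linarith [mem_ball.1 hz]
      _ < ε := by linarith [hr.2]
  have hgz : g z ≤ c * (inner ℂ h ν).re + M * ‖h‖ ^ 2 := by
    have := (abs_le.1 (by simpa using hεM (by simpa using hh))).2
    simp only [h, add_sub_cancel] at this ⊢
    linarith
  have h2r : 2 * r * g z < 0 := by
    nlinarith [mul_le_mul_of_nonneg_left hgz (by linarith [hr.1] : (0 : ℝ) ≤ 2 * r),
      mul_lt_mul_of_pos_left hball hc, mul_le_mul_of_nonneg_right hrM.le (sq_nonneg ‖h‖)]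
  exact neg_of_mul_neg_right h2r (by linarith [hr.1])

section LeviPolynomial

variable {E : Type*} [NormedAddCommGroup E] [NormedSpace ℂ E] [FiniteDimensional ℂ E]

/-- `(h, k) ↦ (B(h,k) - B(ih,ik) - i (B(h,ik) + B(ih,k))) / 4`, built as the `ℂ`-linear extension
of its real part in each variable; for the real Hessian of `ρ` this is
`∑ (∂²ρ/∂z_j∂z_k) h_j k_k`. -/
def holomorphicPart (B : E →L[ℝ] E →L[ℝ] ℝ) : E →L[ℂ] E →L[ℂ] ℂ :=
  let J : E →L[ℝ] E := (I • ContinuousLinearMap.id ℂ E).restrictScalars ℝ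
  let φ : E →L[ℝ] E →L[ℝ] ℝ := (4 : ℝ)⁻¹ • (B - B.bilinearComp J J)
  have hφ : ∀ h k, (StrongDual.extendRCLike (φ h) : StrongDual ℂ E) k
      = (StrongDual.extendRCLike (φ.flip k) : StrongDual ℂ E) h :=
    fun h k => by simp [StrongDual.extendRCLike_apply, φ, J, smul_smul, add_comm]
  LinearMap.toContinuousLinearMap
    { toFun := fun h => StrongDual.extendRCLikeₗ (φ h)
      map_add' := fun h h' => by simp only [map_add]
      map_smul' := fun c h => by
        ext k
        rw [StrongDual.extendRCLikeₗ_apply, hφ, map_smul, RingHom.id_apply, smul_apply,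
          StrongDual.extendRCLikeₗ_apply, hφ] }

lemma re_holomorphicPart_apply (B : E →L[ℝ] E →L[ℝ] ℝ) (h k : E) :
    (holomorphicPart B h k).re = (B h k - B (I • h) (I • k)) / 4 := by
  simp only [holomorphicPart, LinearMap.coe_toContinuousLinearMap', LinearMap.coe_mk,
    AddHom.coe_mk, StrongDual.extendRCLikeₗ_apply, ← RCLike.re_to_complex,
    StrongDual.re_extendRCLike_apply, smul_apply, sub_apply, smul_eq_mul,
    ContinuousLinearMap.bilinearComp_apply, ContinuousLinearMap.coe_restrictScalars',
    ContinuousLinearMap.restrictScalars_smul, ContinuousLinearMap.id_apply]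
  ring

/-- The Levi polynomial, normalised so that `ρ (p + w) = ρ p + re (P w) + L_ρ(p, w) + o(|w|²)`. -/
def leviPolynomial (ρ : E → ℝ) (p w : E) : ℂ :=
  (StrongDual.extendRCLike (fderiv ℝ ρ p) : StrongDual ℂ E) w
    + holomorphicPart (fderiv ℝ (fderiv ℝ ρ) p) w w

variable (ρ : E → ℝ) (p : E)

lemma re_leviPolynomial (w : E) :
    (leviPolynomial ρ p w).re = fderiv ℝ ρ p w
      + (fderiv ℝ (fderiv ℝ ρ) p w w - fderiv ℝ (fderiv ℝ ρ) p (I • w) (I • w)) / 4 := by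
  rw [leviPolynomial, Complex.add_re, re_holomorphicPart_apply, ← RCLike.re_to_complex,
    StrongDual.re_extendRCLike_apply]

lemma leviPolynomial_zero : leviPolynomial ρ p 0 = 0 := by
  simp [leviPolynomial]

lemma differentiable_leviPolynomial : Differentiable ℂ (leviPolynomial ρ p) := by
  unfold leviPolynomial
  fun_prop

lemma hasFDerivAt_leviPolynomial_zero :
    HasFDerivAt (leviPolynomial ρ p)
      (StrongDual.extendRCLike (fderiv ℝ ρ p) : StrongDual ℂ E) 0 := by
  have := (StrongDual.extendRCLike (fderiv ℝ ρ p) : StrongDual ℂ E).hasFDerivAt.add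
    ((holomorphicPart (fderiv ℝ (fderiv ℝ ρ) p)).hasFDerivAt_of_bilinear (hasFDerivAt_id (0 : E))
      (hasFDerivAt_id (0 : E)))
  simp only [id, map_zero, zero_apply, add_zero] at this
  exact this

lemma HasFDerivWithinAt.leviPolynomial_comp_sub {f : E → E} {A : E →L[ℝ] E} {s : Set E}
    (hf : HasFDerivWithinAt f A s p) (hfp : f p = p) :
    HasFDerivWithinAt (fun z => leviPolynomial ρ p (f z - p))
      (((StrongDual.extendRCLike (fderiv ℝ ρ p) : StrongDual ℂ E).restrictScalars ℝ).comp A)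
      s p := by
  have hP : HasFDerivAt (leviPolynomial ρ p)
      ((StrongDual.extendRCLike (fderiv ℝ ρ p) : StrongDual ℂ E).restrictScalars ℝ) (f p - p) := by
    rw [hfp, sub_self]
    exact (hasFDerivAt_leviPolynomial_zero ρ p).restrictScalars ℝ
  exact hP.comp_hasFDerivWithinAt (f := fun z => f z - p) p (hf.sub_const p)

end LeviPolynomial

lemma leviForm_eq_fderiv {n : ℕ} (ρ : EuclideanSpace ℂ (Fin n) → ℝ)
    (q v : EuclideanSpace ℂ (Fin n)) :
    LeviForm ρ q v
      = (fderiv ℝ (fderiv ℝ ρ) q v v + fderiv ℝ (fderiv ℝ ρ) q (I • v) (I • v)) / 4 := by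
  simp [LeviForm, iteratedFDeriv_two_apply]

theorem eventually_re_leviPolynomial_le {n : ℕ} {ρ : EuclideanSpace ℂ (Fin n) → ℝ}
    {p : EuclideanSpace ℂ (Fin n)} (hρ : ContDiff ℝ 2 ρ) (hL : ∀ v, v ≠ 0 → 0 < LeviForm ρ p v) :
    ∀ᶠ h in 𝓝 0, (leviPolynomial ρ p h).re ≤ ρ (p + h) - ρ p := by
  obtain ⟨δ, hδ, hδL⟩ := exists_pos_mul_norm_sq_le (q := LeviForm ρ p)
    (show Continuous fun v => LeviForm ρ p v by simp only [leviForm_eq_fderiv]; fun_prop)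
    (fun t v => by
      rw [leviForm_eq_fderiv, leviForm_eq_fderiv, smul_comm I t v]
      simp only [map_smul, smul_apply, smul_eq_mul]
      ring) hL
  filter_upwards [(hρ.isLittleO_taylor_two p).bound hδ] with h hh
  have := (abs_le.1 (by simpa using hh)).1
  rw [re_leviPolynomial]
  linarith [hδL h, leviForm_eq_fderiv ρ p h]

theorem boundary_hopf_positivity_general
    {n : ℕ}
    (Ω : Set (EuclideanSpace ℂ (Fin n)))
    -- `C²` defining function for `Ω`
    (ρ : EuclideanSpace ℂ (Fin n) → ℝ) (hρC2 : ContDiff ℝ 2 ρ)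
    (hρΩ : Ω = {z | ρ z < 0}) (hρfr : frontier Ω = {z | ρ z = 0})
    -- strong pseudoconvexity: `ρ` strictly plurisubharmonic near the closure of `Ω`
    (V : Set (EuclideanSpace ℂ (Fin n))) (hVcl : closure Ω ⊆ V)
    (hpsh : ∀ q ∈ V, ∀ v : EuclideanSpace ℂ (Fin n), v ≠ 0 → 0 < LeviForm ρ q v)
    -- the boundary point `p` and the unit outward normal `ν = ∇ρ(p)/|∇ρ(p)|`
    (p : EuclideanSpace ℂ (Fin n)) (hp : p ∈ frontier Ω)
    (ν : EuclideanSpace ℂ (Fin n)) (hν1 : ‖ν‖ = 1)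
    (hν : ∃ c : ℝ, 0 < c ∧ ∀ v, fderiv ℝ ρ p v = c * (inner ℂ v ν : ℂ).re)
    -- the holomorphic self-map `f`, C² up to the boundary near `p`, fixing `p`
    (f : EuclideanSpace ℂ (Fin n) → EuclideanSpace ℂ (Fin n))
    (hf : DifferentiableOn ℂ f Ω) (hfself : MapsTo f Ω Ω)
    (hfp : f p = p)
    -- `A` is the (ℂ-linear) Jacobian `J_f(p)` of `f` at `p`
    (A : EuclideanSpace ℂ (Fin n) →L[ℂ] EuclideanSpace ℂ (Fin n))
    (hA : HasFDerivWithinAt f (A.restrictScalars ℝ) (closure Ω) p) :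
    0 < fderiv ℝ ρ p (A ν) ∧ 0 < (inner ℂ ν (A ν) : ℂ).re := by
  obtain ⟨c, hc, hdρ⟩ := hν
  have hpcl : p ∈ closure Ω := frontier_subset_closure hp
  have hρp : ρ p = 0 := (hρfr ▸ hp : p ∈ {z | ρ z = 0})
  have hP : ∀ᶠ z in 𝓝[closure Ω] p, (leviPolynomial ρ p (f z - p)).re ≤ ρ (f z) := by
    have hf0 : Tendsto (fun z => f z - p) (𝓝[closure Ω] p) (𝓝 0) := by
      simpa [hfp] using hA.continuousWithinAt.tendsto.sub_const p
    filter_upwards [hf0.eventually (eventually_re_leviPolynomial_le hρC2 (hpsh p (hVcl hpcl)))]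
      with z hz
    simpa [hρp] using hz
  have hinterior : ∀ᶠ r in 𝓝[>] 0, ball (p - r • ν) r ⊆ Ω :=
    hρΩ ▸ eventually_ball_sub_smul_subset_of_isBigO hν1 hc
      ((hρC2.isBigO_sub_sub_fderiv p).congr_left fun h => by simp [hρp, hdρ])
  obtain ⟨r, ⟨hrΩ, hrP⟩, hr⟩ := ((hinterior.and (eventually_ball_sub_smul_subset hν1
    (mem_nhdsWithin_iff_eventually.1 hP))).and self_mem_nhdsWithin).exists
  have hpos := HasFDerivWithinAt.re_apply_pos_of_re_neg hν1 hr
    ((hA.mono (hrΩ.trans subset_closure)).leviPolynomial_comp_sub ρ p hfp)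
    ((differentiable_leviPolynomial ρ p).comp_differentiableOn ((hf.mono hrΩ).sub_const p))
    (fun z hz => (hrP hz (subset_closure (hrΩ hz))).trans_lt
      (hρΩ ▸ hfself (hrΩ hz) : f z ∈ {z | ρ z < 0}))
    (by simp [hfp, leviPolynomial_zero])
  have hdρA : 0 < fderiv ℝ ρ p (A ν) := by simpa [← RCLike.re_to_complex] using hpos
  refine ⟨hdρA, pos_of_mul_pos_right ?_ hc.le⟩
  rwa [hdρ, ← RCLike.re_to_complex, inner_re_symm] at hdρA

/-- **Hopf-lemma positivity at the boundary fixed point.**  Let `Ω ⊂ ℂⁿ` be a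
bounded strongly pseudoconvex domain with `C²` boundary whose defining function
`ρ` is strictly plurisubharmonic on a neighborhood of the closure of `Ω`, let
`p ∈ ∂Ω`, and let `f : Ω → Ω` be holomorphic, `C²` up to the boundary near `p`,
with `f(p) = p`.  Then `dρ_p(df_p(ν_p)) > 0`; equivalently
`Re⟨J_f(p)ν_p, ν_p⟩ > 0`. -/
theorem boundary_hopf_positivity
    {n : ℕ} (hn : 1 ≤ n)
    (Ω : Set (EuclideanSpace ℂ (Fin n))) (hΩopen : IsOpen Ω)
    (hΩconn : IsConnected Ω) (hΩbd : Bornology.IsBounded Ω)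
    -- `C²` defining function for `Ω`
    (ρ : EuclideanSpace ℂ (Fin n) → ℝ) (hρC2 : ContDiff ℝ 2 ρ)
    (hρΩ : Ω = {z | ρ z < 0}) (hρfr : frontier Ω = {z | ρ z = 0})
    (hρgrad : ∀ q ∈ frontier Ω, fderiv ℝ ρ q ≠ 0)
    -- strong pseudoconvexity: `ρ` strictly plurisubharmonic near the closure of `Ω`
    (V : Set (EuclideanSpace ℂ (Fin n))) (hVopen : IsOpen V) (hVcl : closure Ω ⊆ V)
    (hpsh : ∀ q ∈ V, ∀ v : EuclideanSpace ℂ (Fin n), v ≠ 0 → 0 < LeviForm ρ q v)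
    -- the boundary point `p` and the unit outward normal `ν = ∇ρ(p)/|∇ρ(p)|`
    (p : EuclideanSpace ℂ (Fin n)) (hp : p ∈ frontier Ω)
    (ν : EuclideanSpace ℂ (Fin n)) (hν1 : ‖ν‖ = 1)
    (hν : ∃ c : ℝ, 0 < c ∧ ∀ v, fderiv ℝ ρ p v = c * (inner ℂ v ν : ℂ).re)
    -- the holomorphic self-map `f`, C² up to the boundary near `p`, fixing `p`
    (f : EuclideanSpace ℂ (Fin n) → EuclideanSpace ℂ (Fin n))
    (hf : DifferentiableOn ℂ f Ω) (hfself : MapsTo f Ω Ω)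
    (U : Set (EuclideanSpace ℂ (Fin n))) (hUopen : IsOpen U) (hpU : p ∈ U)
    (hfC2 : ContDiffOn ℝ 2 f (closure Ω ∩ U)) (hfp : f p = p)
    -- `A` is the (ℂ-linear) Jacobian `J_f(p)` of `f` at `p`
    (A : EuclideanSpace ℂ (Fin n) →L[ℂ] EuclideanSpace ℂ (Fin n))
    (hA : HasFDerivWithinAt f (A.restrictScalars ℝ) (closure Ω) p) :
    0 < fderiv ℝ ρ p (A ν) ∧ 0 < (inner ℂ ν (A ν) : ℂ).re :=
  boundary_hopf_positivity_general Ω ρ hρC2 hρΩ hρfr V hVcl hpsh p hp ν hν1 hν f hf hfself hfp A hA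
end
end

section
/- Let Ω ⊂ ℂⁿ be a bounded domain with C² boundary. Then there exist ε > 0 and C = C(ε) > 0 such that for every z ∈ Ω with δ(z) < ε and every v ∈ ℂⁿ, the Carathéodory metric satisfies 𝒞_Ω(z, v) ≤ |v_N(z)|/δ(z) + C·|v_T(z)|/δ(z)^{1/2}. -/
open Metric Set Filter

noncomputable section

section Helpers
open Complex

lemma norm_lt_one_iff_normSq {z : ℂ} : ‖z‖ < 1 ↔ Complex.normSq z < 1 := by
  rw [← Complex.sq_norm]
  constructor
  · intro h; nlinarith [norm_nonneg z]
  · intro h; nlinarith [norm_nonneg z]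

lemma mobius_mem {a w : ℂ} (ha : ‖a‖ < 1) (hw : ‖w‖ < 1) :
    ‖(w - a) / (1 - (starRingEnd ℂ) a * w)‖ < 1 := by
  rw [norm_lt_one_iff_normSq] at ha hw ⊢
  have key : Complex.normSq (1 - (starRingEnd ℂ) a * w) - Complex.normSq (w - a)
      = (1 - Complex.normSq a) * (1 - Complex.normSq w) := by
    simp only [Complex.normSq_apply, Complex.sub_re, Complex.sub_im, Complex.mul_re,
      Complex.mul_im, Complex.one_re, Complex.one_im, Complex.conj_re, Complex.conj_im]
    ring
  have hpos : 0 < Complex.normSq (1 - (starRingEnd ℂ) a * w) := by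
    nlinarith [Complex.normSq_nonneg (w - a)]
  rw [Complex.normSq_div, div_lt_one hpos]
  nlinarith

lemma schwarzPick {g : ℂ → ℂ} {r : ℝ} (hr : 0 < r)
    (hg : DifferentiableOn ℂ g (ball 0 r)) (hm : MapsTo g (ball 0 r) (ball 0 1)) :
    ‖deriv g 0‖ * r ≤ 1 - ‖g 0‖ ^ 2 := by
  set a := g 0 with ha_def
  have haball : a ∈ ball (0:ℂ) 1 := hm (mem_ball_self hr)
  have ha : ‖a‖ < 1 := by simpa [dist_eq_norm] using haball
  set m : ℂ → ℂ := fun w => (w - a) / (1 - (starRingEnd ℂ) a * w) with hm_def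
  have hden : ∀ w : ℂ, ‖w‖ < 1 → (1 : ℂ) - (starRingEnd ℂ) a * w ≠ 0 := by
    intro w hw h
    have h1 : ‖(starRingEnd ℂ) a * w‖ < 1 := by
      rw [norm_mul, RCLike.norm_conj]
      nlinarith [norm_nonneg w, norm_nonneg a]
    have : (1:ℂ) = (starRingEnd ℂ) a * w := by linear_combination h
    rw [← this] at h1; simp at h1
  have hmd : ∀ w : ℂ, ‖w‖ < 1 → DifferentiableAt ℂ m w := by
    intro w hw
    apply DifferentiableAt.div
    · fun_prop
    · fun_prop
    · exact hden w hw
  have hnorm_lt : ∀ x ∈ ball (0:ℂ) r, ‖g x‖ < 1 := by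
    intro x hx; simpa [dist_eq_norm] using hm hx
  have hh : DifferentiableOn ℂ (m ∘ g) (ball 0 r) := by
    intro x hx
    exact (hmd (g x) (hnorm_lt x hx)).comp_differentiableWithinAt x (hg x hx)
  have hh0 : (m ∘ g) 0 = 0 := by
    simp [m, hm_def]
    left; exact sub_self _
  have hhm : MapsTo (m ∘ g) (ball 0 r) (ball ((m ∘ g) 0) 1) := by
    rw [hh0]
    intro x hx
    have := mobius_mem ha (hnorm_lt x hx)
    simpa [dist_eq_norm, m] using this
  have hkey : ‖deriv (m ∘ g) 0‖ ≤ 1 / r :=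
    Complex.norm_deriv_le_div_of_mapsTo_ball hh (hhm.mono_right ball_subset_closedBall) hr
  -- compute deriv m a
  have hane : (1 : ℂ) - (starRingEnd ℂ) a * a ≠ 0 := hden a ha
  have hdm : HasDerivAt m ((1 - (starRingEnd ℂ) a * a)⁻¹) a := by
    have h1 : HasDerivAt (fun w : ℂ => w - a) 1 a := (hasDerivAt_id a).sub_const a
    have h2 : HasDerivAt (fun w : ℂ => (1:ℂ) - (starRingEnd ℂ) a * w)
        (-((starRingEnd ℂ) a)) a := by
      simpa using (((hasDerivAt_id a).const_mul ((starRingEnd ℂ) a)).const_sub 1)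
    have := h1.div h2 hane
    refine this.congr_deriv ?_
    rw [sub_self, zero_mul, sub_zero, one_mul, pow_two, ← div_div, div_self hane, one_div]
  have hga : DifferentiableAt ℂ g 0 := hg.differentiableAt (isOpen_ball.mem_nhds (mem_ball_self hr))
  have hderiv_comp : deriv (m ∘ g) 0 = (1 - (starRingEnd ℂ) a * a)⁻¹ * deriv g 0 := by
    rw [deriv_comp 0 hdm.differentiableAt hga, hdm.deriv]
  have hnorm_eq : ‖(1 : ℂ) - (starRingEnd ℂ) a * a‖ = 1 - ‖a‖ ^ 2 := by
    have hcm : (starRingEnd ℂ) a * a = (Complex.normSq a : ℂ) := by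
      rw [mul_comm, Complex.mul_conj]
    rw [hcm]
    have : ((1:ℂ) - (Complex.normSq a : ℂ)) = ((1 - Complex.normSq a : ℝ) : ℂ) := by
      push_cast; ring
    rw [this, Complex.norm_real, Complex.normSq_eq_norm_sq]
    rw [Real.norm_eq_abs]
    exact _root_.abs_of_nonneg (by nlinarith [norm_nonneg a])
  have hpos : (0:ℝ) < 1 - ‖a‖ ^ 2 := by nlinarith [norm_nonneg a]
  have heq2 : deriv g 0 = (1 - (starRingEnd ℂ) a * a) * deriv (m ∘ g) 0 := by
    rw [hderiv_comp]; field_simp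
  have : ‖deriv g 0‖ = (1 - ‖a‖ ^ 2) * ‖deriv (m ∘ g) 0‖ := by
    rw [heq2, norm_mul, hnorm_eq]
  rw [this]
  calc (1 - ‖a‖ ^ 2) * ‖deriv (m ∘ g) 0‖ * r ≤ (1 - ‖a‖ ^ 2) * (1/r) * r := by
        apply mul_le_mul_of_nonneg_right _ hr.le
        exact mul_le_mul_of_nonneg_left hkey hpos.le
    _ = 1 - ‖a‖ ^ 2 := by field_simp

lemma disc_bound {n : ℕ} {Ω : Set (EuclideanSpace ℂ (Fin n))} (hΩ : IsOpen Ω)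
    {f : EuclideanSpace ℂ (Fin n) → ℂ} (hf : DifferentiableOn ℂ f Ω)
    (hmap : MapsTo f Ω (ball 0 1)) {z e : EuclideanSpace ℂ (Fin n)} (hz : z ∈ Ω)
    (he : ∀ ζ : ℂ, ‖ζ‖ < 1 → z + ζ • e ∈ Ω) :
    ‖fderiv ℂ f z e‖ ≤ 1 - ‖f z‖ ^ 2 := by
  set φ : ℂ → EuclideanSpace ℂ (Fin n) := fun ζ => z + ζ • e with hφ_def
  have hφd : ∀ ζ : ℂ, HasDerivAt φ e ζ := by
    intro ζ
    simpa [hφ_def] using ((hasDerivAt_id ζ).smul_const e).const_add z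
  have hmem : ∀ ζ : ℂ, ζ ∈ ball (0:ℂ) 1 → φ ζ ∈ Ω := by
    intro ζ hζ
    exact he ζ (by simpa [dist_eq_norm] using hζ)
  have hφ0 : φ 0 = z := by simp [hφ_def]
  have hg : DifferentiableOn ℂ (f ∘ φ) (ball 0 1) := by
    intro ζ hζ
    exact ((hf.differentiableAt (hΩ.mem_nhds (hmem ζ hζ))).comp ζ
      (hφd ζ).differentiableAt).differentiableWithinAt
  have hgm : MapsTo (f ∘ φ) (ball 0 1) (ball 0 1) := fun ζ hζ => hmap (hmem ζ hζ)
  have hfz : HasFDerivAt f (fderiv ℂ f z) z := (hf.differentiableAt (hΩ.mem_nhds hz)).hasFDerivAt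
  have hgd : HasDerivAt (f ∘ φ) (fderiv ℂ f z e) 0 := by
    have h2 : HasFDerivAt f (fderiv ℂ f z) (φ 0) := hφ0 ▸ hfz
    have := h2.comp_hasDerivAt 0 (hφd 0)
    simpa using this
  have := schwarzPick one_pos hg hgm
  rw [hgd.deriv] at this
  simpa [hφ0] using this

section Taylor
variable {E : Type*} [NormedAddCommGroup E] [NormedSpace ℝ E]

lemma fderiv_lip {ρ : E → ℝ} (hρ : ContDiff ℝ 2 ρ) {s : Set E} (hs : Convex ℝ s) {M : ℝ}
    (hM : ∀ u ∈ s, ‖fderiv ℝ (fderiv ℝ ρ) u‖ ≤ M) {x y : E} (hx : x ∈ s) (hy : y ∈ s) :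
    ‖fderiv ℝ ρ y - fderiv ℝ ρ x‖ ≤ M * ‖y - x‖ := by
  have h1 : ContDiff ℝ 1 (fderiv ℝ ρ) := hρ.fderiv_right (by norm_num)
  exact hs.norm_image_sub_le_of_norm_fderiv_le
    (fun u _ => (h1.differentiable one_ne_zero).differentiableAt) hM hx hy

lemma taylor_sq {ρ : E → ℝ} (hρ : ContDiff ℝ 2 ρ) {s : Set E} (hs : Convex ℝ s) {M : ℝ}
    (hM : ∀ u ∈ s, ‖fderiv ℝ (fderiv ℝ ρ) u‖ ≤ M) {x y : E} (hx : x ∈ s) (hy : y ∈ s) :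
    ‖ρ y - ρ x - fderiv ℝ ρ x (y - x)‖ ≤ M * ‖y - x‖ ^ 2 := by
  have hM0 : 0 ≤ M := (hM x hx).trans' (ContinuousLinearMap.opNorm_nonneg _)
  have hdiff : Differentiable ℝ ρ := hρ.differentiable (by norm_num)
  set g : E → ℝ := fun u => ρ u - fderiv ℝ ρ x (u - x) with hg_def
  have hseg : segment ℝ x y ⊆ s := hs.segment_subset hx hy
  have hgd : ∀ u, HasFDerivAt g (fderiv ℝ ρ u - fderiv ℝ ρ x) u := by
    intro u
    have h1 : HasFDerivAt ρ (fderiv ℝ ρ u) u := (hdiff u).hasFDerivAt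
    have h2 : HasFDerivAt (fun u => fderiv ℝ ρ x (u - x)) (fderiv ℝ ρ x) u := by
      have : (fun u => fderiv ℝ ρ x (u - x)) = fun u => fderiv ℝ ρ x u - fderiv ℝ ρ x x := by
        funext u; rw [map_sub]
      rw [this]
      exact (fderiv ℝ ρ x).hasFDerivAt.sub_const _
    exact h1.sub h2
  have hbound : ∀ u ∈ segment ℝ x y, ‖fderiv ℝ ρ u - fderiv ℝ ρ x‖ ≤ M * ‖y - x‖ := by
    intro u hu
    have h1 : ‖fderiv ℝ ρ u - fderiv ℝ ρ x‖ ≤ M * ‖u - x‖ := fderiv_lip hρ hs hM hx (hseg hu)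
    refine h1.trans (mul_le_mul_of_nonneg_left ?_ hM0)
    obtain ⟨a, b, ha, hb, hab, rfl⟩ := hu
    have : a • x + b • y - x = b • (y - x) := by
      have : a = 1 - b := by linarith
      rw [this]; module
    rw [this, norm_smul, Real.norm_eq_abs, _root_.abs_of_nonneg hb]
    nlinarith [norm_nonneg (y - x)]
  have := (convex_segment x y).norm_image_sub_le_of_norm_hasFDerivWithin_le
    (fun u hu => (hgd u).hasFDerivWithinAt) hbound (left_mem_segment ℝ x y)
    (right_mem_segment ℝ x y)
  have hgx : g x = ρ x := by simp [hg_def]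
  have hgy : g y = ρ y - fderiv ℝ ρ x (y - x) := rfl
  rw [hgy, hgx] at this
  calc ‖ρ y - ρ x - fderiv ℝ ρ x (y - x)‖ = ‖ρ y - fderiv ℝ ρ x (y - x) - ρ x‖ := by ring_nf
    _ ≤ M * ‖y - x‖ * ‖y - x‖ := this
    _ = M * ‖y - x‖ ^ 2 := by ring

end Taylor

end Helpers

/-- The Carathéodory metric of a domain `D ⊂ ℂⁿ`:
`𝒞_D(z,v) = sup { |df_z(v)|/(1−|f(z)|²) : f : D → 𝔻 holomorphic }`. -/
def caraMetric {n : ℕ} (D : Set (EuclideanSpace ℂ (Fin n)))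
    (z v : EuclideanSpace ℂ (Fin n)) : ℝ :=
  sSup ((fun f : EuclideanSpace ℂ (Fin n) → ℂ =>
      ‖fderiv ℂ f z v‖ / (1 - ‖f z‖ ^ 2)) ''
    {f | DifferentiableOn ℂ f D ∧ MapsTo f D (Metric.ball (0 : ℂ) 1)})

set_option maxHeartbeats 1000000 in
/-- **Growth estimate for the Carathéodory metric near a `C²` boundary.**
Let `Ω ⊂ ℂⁿ` be a bounded domain with `C²` boundary.  Then there are `ε > 0` and
`C > 0` such that for every `z ∈ Ω` with `δ(z) < ε`, every nearest boundary point
`w` of `z` with unit outward normal `ν` at `w`, and every `v ∈ ℂⁿ`,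
`𝒞_Ω(z,v) ≤ |v_N(z)|/δ(z) + C·|v_T(z)|/δ(z)^{1/2}`, where
`v_N(z) = ⟨v, ν⟩ν` and `v_T(z) = v − v_N(z)`. -/
theorem caratheodory_growth_estimate
    {n : ℕ} (hn : 1 ≤ n)
    (Ω : Set (EuclideanSpace ℂ (Fin n))) (hΩopen : IsOpen Ω)
    (hΩconn : IsConnected Ω) (hΩbd : Bornology.IsBounded Ω)
    -- `C²` defining function for `Ω`
    (ρ : EuclideanSpace ℂ (Fin n) → ℝ) (hρC2 : ContDiff ℝ 2 ρ)
    (hρΩ : Ω = {z | ρ z < 0}) (hρfr : frontier Ω = {z | ρ z = 0})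
    (hρgrad : ∀ q ∈ frontier Ω, fderiv ℝ ρ q ≠ 0) :
    ∃ ε > (0 : ℝ), ∃ C > (0 : ℝ),
      ∀ z ∈ Ω, Metric.infDist z (frontier Ω) < ε →
        ∀ w ∈ frontier Ω, dist z w = Metric.infDist z (frontier Ω) →
          ∀ ν : EuclideanSpace ℂ (Fin n), ‖ν‖ = 1 →
            (∃ c : ℝ, 0 < c ∧ ∀ u, fderiv ℝ ρ w u = c * (inner ℂ u ν : ℂ).re) →
              ∀ v : EuclideanSpace ℂ (Fin n),
                caraMetric Ω z v ≤
                  ‖(inner ℂ ν v : ℂ)‖ / Metric.infDist z (frontier Ω)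
                  + C * ‖v - (inner ℂ ν v : ℂ) • ν‖ /
                      Real.sqrt (Metric.infDist z (frontier Ω)) := by
  classical
  rcases eq_empty_or_nonempty (frontier Ω) with hfr_empty | wne
  · exact ⟨1, one_pos, 1, one_pos, fun z _ _ w hw => by
      rw [hfr_empty] at hw; exact absurd hw (notMem_empty w)⟩
  -- setup
  obtain ⟨R, hR⟩ := hΩbd.subset_closedBall 0
  set K : Set (EuclideanSpace ℂ (Fin n)) := Metric.closedBall 0 (R + 1) with hK_def
  have hKconv : Convex ℝ K := convex_closedBall _ _
  have hKcomp : IsCompact K := isCompact_closedBall _ _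
  have hcont1 : Continuous fun u => fderiv ℝ ρ u := hρC2.continuous_fderiv (by norm_num)
  have hC1 : ContDiff ℝ 1 (fderiv ℝ ρ) := hρC2.fderiv_right (by norm_num)
  have hcont2 : Continuous fun u => fderiv ℝ (fderiv ℝ ρ) u :=
    hC1.continuous_fderiv one_ne_zero
  obtain ⟨M₀, hM₀⟩ := hKcomp.exists_bound_of_continuousOn
    (E := EuclideanSpace ℂ (Fin n) →L[ℝ] EuclideanSpace ℂ (Fin n) →L[ℝ] ℝ) hcont2.continuousOn
  -- compactness of the frontier and the minimum of the gradient norm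
  have hfr_sub : frontier Ω ⊆ Metric.closedBall 0 R :=
    (frontier_subset_closure.trans (closure_minimal hR isClosed_closedBall))
  have hfrcomp : IsCompact (frontier Ω) :=
    IsCompact.of_isClosed_subset (isCompact_closedBall _ _) isClosed_frontier hfr_sub
  obtain ⟨w₀, hw₀, hmin⟩ := hfrcomp.exists_isMinOn wne
    ((continuous_norm.comp hcont1).continuousOn)
  set c₀ : ℝ := ‖fderiv ℝ ρ w₀‖ with hc₀_def
  have hc₀ : 0 < c₀ := norm_pos_iff.mpr (hρgrad w₀ hw₀)
  set M : ℝ := max 1 (max M₀ c₀) with hM_def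
  have hM1 : (1:ℝ) ≤ M := le_max_left _ _
  have hM0 : (0:ℝ) < M := lt_of_lt_of_le one_pos hM1
  have hMb : ∀ x ∈ K, ‖fderiv ℝ (fderiv ℝ ρ) x‖ ≤ M := fun x hx =>
    (hM₀ x hx).trans ((le_max_left _ _).trans (le_max_right _ _))
  have hMc₀ : c₀ ≤ M := (le_max_right _ _).trans (le_max_right _ _)
  set c₁ : ℝ := Real.sqrt (c₀ / (8 * M)) with hc₁_def
  have hc₁ : 0 < c₁ := Real.sqrt_pos.mpr (by positivity)
  have hc₁sq : c₁ ^ 2 = c₀ / (8 * M) := Real.sq_sqrt (by positivity)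
  have hc₁le1 : c₁ ≤ 1 := by
    rw [hc₁_def, show (1:ℝ) = Real.sqrt 1 by simp]
    apply Real.sqrt_le_sqrt
    rw [div_le_one (by positivity)]; linarith
  set ε : ℝ := min 1 (min (c₀ / (8 * M)) ((c₀ / (8 * M * c₁)) ^ 2)) with hε_def
  have hε : 0 < ε := by
    apply lt_min one_pos; apply lt_min (by positivity) (by positivity)
  refine ⟨ε, hε, 1 / c₁, by positivity, ?_⟩
  intro z hz hδε w hw hdist ν hν hex v
  obtain ⟨c, hc, hgradw⟩ := hex
  set δ : ℝ := Metric.infDist z (frontier Ω) with hδ_def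
  -- basic facts about δ
  have hzfr : z ∉ frontier Ω := by
    rw [hΩopen.frontier_eq]; exact fun h => h.2 hz
  have hδ0 : 0 < δ := (isClosed_frontier.notMem_iff_infDist_pos wne).mp hzfr
  have hδ1 : δ < 1 := lt_of_lt_of_le hδε (min_le_left _ _)
  have hδc₀ : δ ≤ c₀ / (8 * M) :=
    le_trans hδε.le ((min_le_right _ _).trans (min_le_left _ _))
  have hδsq : Real.sqrt δ ^ 2 = δ := Real.sq_sqrt hδ0.le
  have hsd : 0 < Real.sqrt δ := Real.sqrt_pos.mpr hδ0
  have hrb : c₁ * Real.sqrt δ ≤ c₀ / (8 * M) := by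
    have h1 : Real.sqrt δ ≤ Real.sqrt ε := Real.sqrt_le_sqrt hδε.le
    have h2 : Real.sqrt ε ≤ c₀ / (8 * M * c₁) := by
      have : ε ≤ (c₀ / (8 * M * c₁)) ^ 2 :=
        (min_le_right _ _).trans (min_le_right _ _)
      calc Real.sqrt ε ≤ Real.sqrt ((c₀ / (8 * M * c₁)) ^ 2) := Real.sqrt_le_sqrt this
        _ = c₀ / (8 * M * c₁) := Real.sqrt_sq (by positivity)
    calc c₁ * Real.sqrt δ ≤ c₁ * (c₀ / (8 * M * c₁)) := by
          apply mul_le_mul_of_nonneg_left (h1.trans h2) hc₁.le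
      _ = c₀ / (8 * M) := by field_simp
  have hzw : ‖z - w‖ = δ := by rw [← dist_eq_norm, hdist]
  -- memberships in K
  have hzK : z ∈ K := by
    have := hR hz
    rw [mem_closedBall_zero_iff] at this ⊢
    linarith
  have hwK : w ∈ K := by
    have := hfr_sub hw
    rw [mem_closedBall_zero_iff] at this ⊢
    linarith
  have hpertK : ∀ ξ : EuclideanSpace ℂ (Fin n), ‖ξ‖ ≤ 1 → z + ξ ∈ K := by
    intro ξ hξ
    have h1 := hR hz
    rw [mem_closedBall_zero_iff] at h1 ⊢
    calc ‖z + ξ‖ ≤ ‖z‖ + ‖ξ‖ := norm_add_le _ _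
      _ ≤ R + 1 := by linarith
  -- the ball of radius δ around z is contained in Ω
  have hball : Metric.ball z δ ⊆ Ω := by
    apply IsPreconnected.subset_left_of_subset_union hΩopen
      isClosed_closure.isOpen_compl
    · exact disjoint_compl_right.mono_left subset_closure
    · intro x hx
      by_cases hxc : x ∈ closure Ω
      · left
        by_contra hxΩ
        have : x ∈ frontier Ω := ⟨hxc, by rwa [hΩopen.interior_eq]⟩
        have h2 : Metric.infDist z (frontier Ω) ≤ dist z x :=
          Metric.infDist_le_dist_of_mem this
        rw [← hδ_def] at h2
        rw [Metric.mem_ball, dist_comm] at hx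
        linarith
      · right; exact hxc
    · exact ⟨z, Metric.mem_ball_self hδ0, hz⟩
    · exact (convex_ball z δ).isPreconnected
  -- gradient facts at w
  have hνν : (inner ℂ ν ν : ℂ) = 1 := by
    rw [inner_self_eq_norm_sq_to_K, hν]; norm_num
  have hLwν : fderiv ℝ ρ w ν = c := by rw [hgradw ν, hνν]; simp
  have hwnorm : ‖fderiv ℝ ρ w‖ ≤ c := by
    apply ContinuousLinearMap.opNorm_le_bound _ hc.le
    intro u
    rw [hgradw u, Real.norm_eq_abs, abs_mul, _root_.abs_of_pos hc]
    have h1 : |(inner ℂ u ν : ℂ).re| ≤ ‖(inner ℂ u ν : ℂ)‖ := by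
      exact Complex.abs_re_le_norm _
    have h2 : ‖(inner ℂ u ν : ℂ)‖ ≤ ‖u‖ * ‖ν‖ := norm_inner_le_norm u ν
    rw [hν, mul_one] at h2
    exact mul_le_mul_of_nonneg_left (h1.trans h2) hc.le
  have hc₀c : c₀ ≤ c := le_trans (hmin hw) hwnorm
  have hLzw : ‖fderiv ℝ ρ z - fderiv ℝ ρ w‖ ≤ M * δ := by
    have := fderiv_lip hρC2 hKconv hMb hwK hzK
    rwa [hzw] at this
  have hclosρ : ∀ x ∈ closure Ω, ρ x ≤ 0 := by
    intro x hx
    have hΩsub : Ω ⊆ {x | ρ x ≤ 0} := by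
      rw [hρΩ]; intro y hy
      have hy' : ρ y < 0 := hy
      exact le_of_lt hy'
    have hsub : closure Ω ⊆ {x | ρ x ≤ 0} :=
      closure_minimal hΩsub (isClosed_le hρC2.continuous continuous_const)
    exact hsub hx
  -- Step A : ρ z is very negative
  have hρz : ρ z ≤ -(c * δ) + 2 * M * δ ^ 2 := by
    set y := z + (δ : ℝ) • ν with hy_def
    have hyz : y - z = (δ : ℝ) • ν := add_sub_cancel_left z _
    have hsmul : ‖(δ : ℝ) • ν‖ = δ := by
      rw [norm_smul, Real.norm_eq_abs, _root_.abs_of_pos hδ0, hν, mul_one]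
    have hynorm : ‖y - z‖ = δ := by rw [hyz, hsmul]
    have hyK : y ∈ K := hpertK _ (by rw [hsmul]; exact hδ1.le)
    have hyρ : ρ y ≤ 0 := by
      apply hclosρ
      apply closure_mono hball
      rw [closure_ball z hδ0.ne']
      rw [Metric.mem_closedBall, dist_eq_norm, hynorm]
    have htay : ‖ρ y - ρ z - fderiv ℝ ρ z (y - z)‖ ≤ M * δ ^ 2 := by
      have := taylor_sq hρC2 hKconv hMb hzK hyK
      rwa [hynorm] at this
    have hLz : δ * (c - M * δ) ≤ fderiv ℝ ρ z (y - z) := by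
      have h1 : fderiv ℝ ρ w (y - z) = δ * c := by
        rw [hyz, map_smul, hLwν, smul_eq_mul]
      have h2 : ‖fderiv ℝ ρ z (y - z) - fderiv ℝ ρ w (y - z)‖ ≤ M * δ * δ := by
        calc ‖fderiv ℝ ρ z (y - z) - fderiv ℝ ρ w (y - z)‖
            = ‖(fderiv ℝ ρ z - fderiv ℝ ρ w) (y - z)‖ := by
              rw [ContinuousLinearMap.sub_apply]
          _ ≤ ‖fderiv ℝ ρ z - fderiv ℝ ρ w‖ * ‖y - z‖ :=
              ContinuousLinearMap.le_opNorm _ _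
          _ ≤ M * δ * δ := by
              rw [hynorm]; exact mul_le_mul_of_nonneg_right hLzw hδ0.le
      rw [Real.norm_eq_abs, abs_le] at h2
      linarith [h2.1]
    rw [Real.norm_eq_abs, abs_le] at htay
    linarith [htay.1, hyρ, hLz]
  -- polynomial versions of the smallness assumptions
  have hδc₀' : 8 * M * δ ≤ c₀ := by
    rw [le_div_iff₀ (by positivity)] at hδc₀; linarith
  have hrb' : 8 * M * (c₁ * Real.sqrt δ) ≤ c₀ := by
    rw [le_div_iff₀ (by positivity)] at hrb; linarith
  have hc₁sq' : 8 * M * c₁ ^ 2 = c₀ := by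
    field_simp at hc₁sq; linarith
  -- Step B : tangential discs of radius c₁ √δ lie in Ω
  have htan : ∀ ξ : EuclideanSpace ℂ (Fin n), (inner ℂ ξ ν : ℂ) = 0 →
      ‖ξ‖ < c₁ * Real.sqrt δ → z + ξ ∈ Ω := by
    intro ξ hξν hξr
    have hξnn : (0:ℝ) ≤ ‖ξ‖ := norm_nonneg ξ
    have hsδ1 : Real.sqrt δ ≤ 1 := by
      rw [show (1:ℝ) = Real.sqrt 1 by simp]
      exact Real.sqrt_le_sqrt hδ1.le
    have hξ1 : ‖ξ‖ ≤ 1 := le_trans hξr.le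
      (mul_le_one₀ hc₁le1 (Real.sqrt_nonneg δ) hsδ1)
    have hxK : z + ξ ∈ K := hpertK ξ hξ1
    have hsub : z + ξ - z = ξ := add_sub_cancel_left z ξ
    have htay : ‖ρ (z + ξ) - ρ z - fderiv ℝ ρ z ξ‖ ≤ M * ‖ξ‖ ^ 2 := by
      have := taylor_sq hρC2 hKconv hMb hzK hxK
      rwa [hsub] at this
    have hLwξ : fderiv ℝ ρ w ξ = 0 := by rw [hgradw, hξν]; simp
    have hLzξ : |fderiv ℝ ρ z ξ| ≤ M * δ * ‖ξ‖ := by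
      have h2 : ‖fderiv ℝ ρ z ξ - fderiv ℝ ρ w ξ‖ ≤ M * δ * ‖ξ‖ := by
        calc ‖fderiv ℝ ρ z ξ - fderiv ℝ ρ w ξ‖
            = ‖(fderiv ℝ ρ z - fderiv ℝ ρ w) ξ‖ := by
              rw [ContinuousLinearMap.sub_apply]
          _ ≤ ‖fderiv ℝ ρ z - fderiv ℝ ρ w‖ * ‖ξ‖ :=
              ContinuousLinearMap.le_opNorm _ _
          _ ≤ M * δ * ‖ξ‖ := mul_le_mul_of_nonneg_right hLzw hξnn
      rw [hLwξ, sub_zero, Real.norm_eq_abs] at h2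
      exact h2
    rw [hρΩ]
    show ρ (z + ξ) < 0
    rw [Real.norm_eq_abs, abs_le] at htay
    rw [abs_le] at hLzξ
    -- collect the estimates
    have e1 : M * ‖ξ‖ ^ 2 ≤ c₀ / 8 * δ := by
      have h1 : ‖ξ‖ ^ 2 ≤ (c₁ * Real.sqrt δ) ^ 2 := by
        apply pow_le_pow_left₀ hξnn hξr.le
      have h2 : (c₁ * Real.sqrt δ) ^ 2 = c₁ ^ 2 * δ := by
        rw [mul_pow, hδsq]
      have h3 : M * (c₁ ^ 2 * δ) = c₀ / 8 * δ := by
        rw [hc₁sq]; field_simp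
      calc M * ‖ξ‖ ^ 2 ≤ M * (c₁ ^ 2 * δ) := by
            rw [← h2]; exact mul_le_mul_of_nonneg_left h1 hM0.le
        _ = c₀ / 8 * δ := h3
    have e2 : M * δ * ‖ξ‖ ≤ c₀ / 8 * δ := by
      have h1 : ‖ξ‖ ≤ c₀ / (8 * M) := hξr.le.trans hrb
      calc M * δ * ‖ξ‖ ≤ M * δ * (c₀ / (8 * M)) := by
            apply mul_le_mul_of_nonneg_left h1 (by positivity)
        _ = c₀ / 8 * δ := by field_simp
    have e3 : 2 * M * δ ^ 2 ≤ c₀ / 4 * δ := by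
      calc 2 * M * δ ^ 2 = 2 * M * δ * δ := by ring
        _ ≤ 2 * M * (c₀ / (8 * M)) * δ := by
            apply mul_le_mul_of_nonneg_right _ hδ0.le
            exact mul_le_mul_of_nonneg_left hδc₀ (by positivity)
        _ = c₀ / 4 * δ := by field_simp; ring
    have e4 : -(c * δ) ≤ -(c₀ * δ) :=
      neg_le_neg (mul_le_mul_of_nonneg_right hc₀c hδ0.le)
    linarith [htay.2, hLzξ.2, hρz, e1, e2, e3, e4, mul_pos hc₀ hδ0]
  -- Step C : bound every competitor function
  have hgoalpos : (0:ℝ) ≤ ‖(inner ℂ ν v : ℂ)‖ / δ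
      + 1 / c₁ * ‖v - (inner ℂ ν v : ℂ) • ν‖ / Real.sqrt δ := by
    apply add_nonneg
    · exact div_nonneg (norm_nonneg _) hδ0.le
    · exact div_nonneg (mul_nonneg (by positivity) (norm_nonneg _)) hsd.le
  unfold caraMetric
  apply Real.sSup_le _ hgoalpos
  rintro x ⟨f, ⟨hfd, hfm⟩, rfl⟩
  have ha : ‖f z‖ < 1 := by simpa using hfm hz
  have hA : (0:ℝ) < 1 - ‖f z‖ ^ 2 := by nlinarith [norm_nonneg (f z)]
  -- bound in the normal direction
  have h1 : ‖fderiv ℂ f z ν‖ ≤ (1 - ‖f z‖ ^ 2) / δ := by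
    have he : ∀ ζ : ℂ, ‖ζ‖ < 1 → z + ζ • (((δ:ℝ):ℂ) • ν) ∈ Ω := by
      intro ζ hζ
      apply hball
      rw [Metric.mem_ball, dist_eq_norm, add_sub_cancel_left, norm_smul, norm_smul,
        Complex.norm_real, Real.norm_eq_abs, _root_.abs_of_pos hδ0, hν, mul_one]
      calc ‖ζ‖ * δ < 1 * δ := by exact mul_lt_mul_of_pos_right hζ hδ0
        _ = δ := one_mul δ
    have hd := disc_bound hΩopen hfd hfm hz he
    rw [map_smul, norm_smul, Complex.norm_real, Real.norm_eq_abs,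
      _root_.abs_of_pos hδ0] at hd
    rw [le_div_iff₀ hδ0]
    linarith [hd]
  -- bound in the tangential direction
  set T : EuclideanSpace ℂ (Fin n) := v - (inner ℂ ν v : ℂ) • ν with hT_def
  have hTν : (inner ℂ T ν : ℂ) = 0 := by
    rw [hT_def, inner_sub_left, inner_smul_left, hνν, mul_one, inner_conj_symm, sub_self]
  have h2 : ‖fderiv ℂ f z T‖ ≤ (1 - ‖f z‖ ^ 2) * ‖T‖ / (c₁ * Real.sqrt δ) := by
    by_cases hT0 : T = 0
    · rw [hT0]
      simp only [map_zero, norm_zero]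
      positivity
    · have hTn : (0:ℝ) < ‖T‖ := norm_pos_iff.mpr hT0
      set s : ℝ := c₁ * Real.sqrt δ / ‖T‖ with hs_def
      have hs : 0 < s := by positivity
      have he : ∀ ζ : ℂ, ‖ζ‖ < 1 → z + ζ • (((s:ℝ):ℂ) • T) ∈ Ω := by
        intro ζ hζ
        apply htan
        · rw [inner_smul_left, inner_smul_left, hTν, mul_zero, mul_zero]
        · rw [norm_smul, norm_smul, Complex.norm_real, Real.norm_eq_abs,
            _root_.abs_of_pos hs]
          have hsT : s * ‖T‖ = c₁ * Real.sqrt δ := by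
            rw [hs_def]; field_simp
          rw [hsT]
          calc ‖ζ‖ * (c₁ * Real.sqrt δ) < 1 * (c₁ * Real.sqrt δ) :=
                mul_lt_mul_of_pos_right hζ (by positivity)
            _ = c₁ * Real.sqrt δ := one_mul _
      have hd := disc_bound hΩopen hfd hfm hz he
      rw [map_smul, norm_smul, Complex.norm_real, Real.norm_eq_abs,
        _root_.abs_of_pos hs] at hd
      rw [le_div_iff₀ (by positivity : (0:ℝ) < c₁ * Real.sqrt δ)]
      have hsT : s * ‖T‖ = c₁ * Real.sqrt δ := by rw [hs_def]; field_simp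
      calc ‖fderiv ℂ f z T‖ * (c₁ * Real.sqrt δ) = (s * ‖fderiv ℂ f z T‖) * ‖T‖ := by
            rw [← hsT]; ring
        _ ≤ (1 - ‖f z‖ ^ 2) * ‖T‖ := mul_le_mul_of_nonneg_right hd (norm_nonneg T)
  -- combine
  have hv : v = (inner ℂ ν v : ℂ) • ν + T := by rw [hT_def]; abel
  have hsplit : ‖fderiv ℂ f z v‖ ≤ ‖(inner ℂ ν v : ℂ)‖ * ‖fderiv ℂ f z ν‖
      + ‖fderiv ℂ f z T‖ := by
    conv_lhs => rw [hv]
    rw [map_add, map_smul]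
    calc ‖(inner ℂ ν v : ℂ) • fderiv ℂ f z ν + fderiv ℂ f z T‖
        ≤ ‖(inner ℂ ν v : ℂ) • fderiv ℂ f z ν‖ + ‖fderiv ℂ f z T‖ := norm_add_le _ _
      _ = ‖(inner ℂ ν v : ℂ)‖ * ‖fderiv ℂ f z ν‖ + ‖fderiv ℂ f z T‖ := by rw [norm_smul]
  rw [div_le_iff₀ hA]
  calc ‖fderiv ℂ f z v‖ ≤ ‖(inner ℂ ν v : ℂ)‖ * ‖fderiv ℂ f z ν‖ + ‖fderiv ℂ f z T‖ := hsplit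
    _ ≤ ‖(inner ℂ ν v : ℂ)‖ * ((1 - ‖f z‖ ^ 2) / δ)
        + (1 - ‖f z‖ ^ 2) * ‖T‖ / (c₁ * Real.sqrt δ) :=
          add_le_add (mul_le_mul_of_nonneg_left h1 (norm_nonneg _)) h2
    _ = (‖(inner ℂ ν v : ℂ)‖ / δ + 1 / c₁ * ‖T‖ / Real.sqrt δ) * (1 - ‖f z‖ ^ 2) := by
          field_simp
end
end

section
/- Let f : 𝔹ⁿ → 𝔹ⁿ be holomorphic, holomorphic at p ∈ ∂𝔹ⁿ, with f(p) = p, and set λ := Re⟨J_f(p)p, p⟩. Then the directional derivative of z ↦ |f(z)| at p in the direction p exists and equals λ, and λ ≥ |1 − ⟨f(0), p⟩|²/(1 − |f(0)|²) > 0. -/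
/-!
Let `a = f 0`. Composing `f` with the automorphism `φ_a` of the ball exchanging `a` and `0`
and applying the Schwarz lemma gives the invariant Schwarz–Pick inequality
`|1 - ⟨f z, a⟩|² (1 - |z|²) ≤ (1 - |a|²) (1 - |f z|²)`.
On the inward normal `z = (1 + t) p`, `t < 0`, it bounds the difference quotients
`(|f z| - 1) / t` from below by `(1 + t/2) |1 - ⟨f z, a⟩|² / (1 - |a|²)`, which tends to
`|1 - ⟨p, a⟩|² / (1 - |a|²)`. Since `g p = p ≠ 0`, `t ↦ |g ((1 + t) p)|` is differentiable at `0`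
with derivative `Re ⟨J_g(p) p, p⟩`, and the bound passes to the limit.
-/

open Metric Set Filter
open scoped InnerProductSpace Topology

variable {E : Type*} [NormedAddCommGroup E] [InnerProductSpace ℂ E]

theorem inner_ne_one_of_norm_mul_norm_lt_one {𝕜 F : Type*} [RCLike 𝕜] [NormedAddCommGroup F]
    [InnerProductSpace 𝕜 F] {a w : F} (h : ‖a‖ * ‖w‖ < 1) : ⟪a, w⟫_𝕜 ≠ 1 := by
  intro h1
  have := norm_inner_le_norm (𝕜 := 𝕜) a w
  rw [h1, norm_one] at this
  linarith

/-- Rudin's automorphism `φ_a(w) = (a - P_a w - s_a Q_a w) / (1 - ⟨w, a⟩)` of the unit ball, where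
`P_a` is the orthogonal projection onto `ℂ a`, `Q_a = 1 - P_a`, `s_a = √(1 - |a|²)`; Mathlib's
`⟪a, w⟫_ℂ` is `⟨w, a⟩`. At `a = 0` the junk value `x / 0 = 0` gives `-w`, still the right map. -/
noncomputable def ballMoebius (a w : E) : E :=
  (1 - ⟪a, w⟫_ℂ)⁻¹ • ((1 - (1 - √(1 - ‖a‖ ^ 2) : ℝ) * ⟪a, w⟫_ℂ / (‖a‖ ^ 2 : ℝ)) • a
    - (√(1 - ‖a‖ ^ 2) : ℂ) • w)

theorem norm_sq_ballMoebius_numerator_add {a : E} (w : E) (ha : ‖a‖ ≤ 1) :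
    ‖(1 - (1 - √(1 - ‖a‖ ^ 2) : ℝ) * ⟪a, w⟫_ℂ / (‖a‖ ^ 2 : ℝ)) • a - (√(1 - ‖a‖ ^ 2) : ℂ) • w‖ ^ 2
      + (1 - ‖a‖ ^ 2) * (1 - ‖w‖ ^ 2) = ‖1 - ⟪a, w⟫_ℂ‖ ^ 2 := by
  rcases eq_or_ne a 0 with rfl | ha0
  · simp
  set s := √(1 - ‖a‖ ^ 2)
  have hs : s ^ 2 = 1 - ‖a‖ ^ 2 := Real.sq_sqrt (by nlinarith [norm_nonneg a])
  have hs0 : 0 ≤ s := Real.sqrt_nonneg _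
  have hr : ‖a‖ ≠ 0 := norm_ne_zero_iff.2 ha0
  rw [@norm_sub_sq ℂ, norm_smul, norm_smul, inner_smul_left, inner_smul_right,
    Complex.norm_real, Real.norm_of_nonneg hs0, mul_pow, mul_pow]
  clear_value s
  generalize ⟪a, w⟫_ℂ = α at *
  generalize ‖a‖ = r at *
  obtain ⟨x, y⟩ := α
  simp only [Complex.sq_norm, Complex.normSq_apply, RCLike.re_to_complex, Complex.sub_re,
    Complex.sub_im, Complex.one_re, Complex.one_im, Complex.mul_re, Complex.mul_im, Complex.div_re,
    Complex.div_im, Complex.ofReal_re, Complex.ofReal_im, Complex.conj_re, Complex.conj_im,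
    mul_zero, zero_mul, sub_zero, add_zero, zero_sub]
  field_simp
  linear_combination (r ^ 6 * ‖w‖ ^ 2 - r ^ 4 * (x ^ 2 + y ^ 2)) * hs

theorem ballMoebius_self (a : E) : ballMoebius a a = 0 := by
  rcases eq_or_ne a 0 with rfl | ha
  · simp [ballMoebius]
  have hcoeff : 1 - ((1 - √(1 - ‖a‖ ^ 2) : ℝ) : ℂ) * ⟪a, a⟫_ℂ / (‖a‖ ^ 2 : ℝ)
      = (√(1 - ‖a‖ ^ 2) : ℂ) := by
    have : (‖a‖ : ℂ) ≠ 0 := by simpa using ha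
    rw [inner_self_eq_norm_sq_to_K]
    simp [this]
  rw [ballMoebius, hcoeff, sub_self, smul_zero]

theorem one_sub_norm_sq_ballMoebius {a w : E} (ha : ‖a‖ ≤ 1) (hw : ⟪a, w⟫_ℂ ≠ 1) :
    ‖1 - ⟪a, w⟫_ℂ‖ ^ 2 * (1 - ‖ballMoebius a w‖ ^ 2) = (1 - ‖a‖ ^ 2) * (1 - ‖w‖ ^ 2) := by
  have hden : ‖1 - ⟪a, w⟫_ℂ‖ ≠ 0 := norm_ne_zero_iff.2 (sub_ne_zero.2 hw.symm)
  have := norm_sq_ballMoebius_numerator_add w ha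
  rw [ballMoebius, norm_smul, norm_inv, mul_pow, inv_pow, mul_sub, mul_one, ← mul_assoc,
    mul_inv_cancel₀ (pow_ne_zero 2 hden), one_mul]
  linarith

theorem mapsTo_ballMoebius {a : E} (ha : ‖a‖ < 1) :
    MapsTo (ballMoebius a) (ball 0 1) (ball 0 1) := by
  intro w hw
  rw [mem_ball_zero_iff] at hw ⊢
  have hne : ⟪a, w⟫_ℂ ≠ 1 :=
    inner_ne_one_of_norm_mul_norm_lt_one (by nlinarith [norm_nonneg a, norm_nonneg w])
  have hpos : 0 < ‖1 - ⟪a, w⟫_ℂ‖ ^ 2 * (1 - ‖ballMoebius a w‖ ^ 2) := by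
    rw [one_sub_norm_sq_ballMoebius ha.le hne]
    have : 0 < 1 - ‖a‖ ^ 2 := by nlinarith [norm_nonneg a]
    have : 0 < 1 - ‖w‖ ^ 2 := by nlinarith [norm_nonneg w]
    positivity
  have := pos_of_mul_pos_right hpos (by positivity)
  exact (pow_lt_one_iff_of_nonneg (norm_nonneg _) two_ne_zero).1 (by linarith)

theorem differentiableOn_ballMoebius {a : E} (ha : ‖a‖ ≤ 1) :
    DifferentiableOn ℂ (ballMoebius a) (ball 0 1) := by
  intro w hw
  have hne : 1 - ⟪a, w⟫_ℂ ≠ 0 := sub_ne_zero.2 (inner_ne_one_of_norm_mul_norm_lt_one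
    (by nlinarith [norm_nonneg a, norm_nonneg w, mem_ball_zero_iff.1 hw])).symm
  have hinner : Differentiable ℂ (fun w : E => ⟪a, w⟫_ℂ) := (innerSL ℂ a).differentiable
  unfold ballMoebius
  exact ((((differentiableAt_const _).sub (hinner w)).inv hne).smul
    (by fun_prop)).differentiableWithinAt

theorem norm_one_sub_inner_sq_mul_le_of_mapsTo_ball {F : Type*} [NormedAddCommGroup F]
    [NormedSpace ℂ F] {f : F → E} (hf : DifferentiableOn ℂ f (ball 0 1))
    (hmaps : MapsTo f (ball 0 1) (ball 0 1)) {z : F} (hz : ‖z‖ < 1) :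
    ‖1 - ⟪f 0, f z⟫_ℂ‖ ^ 2 * (1 - ‖z‖ ^ 2) ≤ (1 - ‖f 0‖ ^ 2) * (1 - ‖f z‖ ^ 2) := by
  have ha : ‖f 0‖ < 1 := mem_ball_zero_iff.1 (hmaps (mem_ball_self one_pos))
  have hfz : ‖f z‖ < 1 := mem_ball_zero_iff.1 (hmaps (mem_ball_zero_iff.2 hz))
  have hne : ⟪f 0, f z⟫_ℂ ≠ 1 :=
    inner_ne_one_of_norm_mul_norm_lt_one (by nlinarith [norm_nonneg (f 0), norm_nonneg (f z)])
  have hschwarz : ‖ballMoebius (f 0) (f z)‖ ≤ ‖z‖ :=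
    Complex.norm_le_norm_of_mapsTo_ball ((differentiableOn_ballMoebius ha.le).comp hf hmaps)
      (((mapsTo_ballMoebius ha).comp hmaps).mono_right ball_subset_closedBall)
      (ballMoebius_self (f 0)) hz
  calc ‖1 - ⟪f 0, f z⟫_ℂ‖ ^ 2 * (1 - ‖z‖ ^ 2)
      ≤ ‖1 - ⟪f 0, f z⟫_ℂ‖ ^ 2 * (1 - ‖ballMoebius (f 0) (f z)‖ ^ 2) := by gcongr
    _ = (1 - ‖f 0‖ ^ 2) * (1 - ‖f z‖ ^ 2) := one_sub_norm_sq_ballMoebius ha.le hne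

theorem norm_one_sub_inner_sq_div_mul_le_of_mapsTo_ball {F : Type*} [NormedAddCommGroup F]
    [NormedSpace ℂ F] {f : F → E} (hf : DifferentiableOn ℂ f (ball 0 1))
    (hmaps : MapsTo f (ball 0 1) (ball 0 1)) {z : F} (hz : ‖z‖ < 1) :
    ‖1 - ⟪f z, f 0⟫_ℂ‖ ^ 2 / (1 - ‖f 0‖ ^ 2) * ((1 - ‖z‖ ^ 2) / 2) ≤ 1 - ‖f z‖ := by
  have ha : ‖f 0‖ < 1 := mem_ball_zero_iff.1 (hmaps (mem_ball_self one_pos))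
  have hfz : ‖f z‖ < 1 := mem_ball_zero_iff.1 (hmaps (mem_ball_zero_iff.2 hz))
  have hpick := norm_one_sub_inner_sq_mul_le_of_mapsTo_ball hf hmaps hz
  rw [← inner_conj_symm, ← RCLike.norm_conj, map_sub, map_one, RCLike.conj_conj] at hpick
  have h0 : 0 < 1 - ‖f 0‖ ^ 2 := by nlinarith [norm_nonneg (f 0)]
  have hsq : 1 - ‖f z‖ ^ 2 ≤ 2 * (1 - ‖f z‖) := by nlinarith [norm_nonneg (f z)]
  rw [div_mul_eq_mul_div, div_le_iff₀ h0]
  nlinarith [mul_le_mul_of_nonneg_left hsq h0.le]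

theorem HasDerivAt.norm_of_ne_zero {G : ℝ → E} {D : E} {t : ℝ} (hG : HasDerivAt G D t)
    (h0 : G t ≠ 0) : HasDerivAt (‖G ·‖) ((⟪G t, D⟫_ℂ).re / ‖G t‖) t := by
  have hre (x : E) : (⟪x, x⟫_ℂ).re = ‖x‖ ^ 2 := inner_self_eq_norm_sq (𝕜 := ℂ) x
  have hsq : HasDerivAt (‖G ·‖ ^ 2) (2 * (⟪G t, D⟫_ℂ).re) t := by
    have := Complex.reCLM.hasFDerivAt.comp_hasDerivAt t (hG.inner ℂ hG)
    simpa only [Function.comp_def, Complex.reCLM_apply, ← Complex.conj_re ⟪D, G t⟫_ℂ,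
      inner_conj_symm, Complex.add_re, ← two_mul, hre] using this
  have hnorm := hsq.sqrt (pow_ne_zero 2 (norm_ne_zero_iff.2 h0))
  simp only [Real.sqrt_sq (norm_nonneg _)] at hnorm
  convert hnorm using 1
  ring

theorem hasDerivAt_norm_comp_add_smul_self {g : E → E} {p : E} (hg : DifferentiableAt ℂ g p)
    (hgp : g p = p) (hp : ‖p‖ = 1) :
    HasDerivAt (fun t : ℝ => ‖g (p + t • p)‖) (⟪p, fderiv ℂ g p p⟫_ℂ).re 0 := by
  have hray : HasDerivAt (fun t : ℝ => p + t • p) p 0 := by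
    simpa using ((hasDerivAt_id (0 : ℝ)).smul_const p).const_add p
  have hG := (hg.hasFDerivAt.restrictScalars ℝ).comp_hasDerivAt_of_eq 0 hray (by simp)
  have hp0 : p ≠ 0 := norm_ne_zero_iff.1 (by rw [hp]; exact one_ne_zero)
  simpa [Function.comp_def, hgp, hp] using hG.norm_of_ne_zero (by simpa [hgp] using hp0)

theorem HasDerivAt.le_of_eventually_mul_le_sub_nhdsLT {F C : ℝ → ℝ} {d x : ℝ}
    (hF : HasDerivAt F d x) (hC : ContinuousAt C x)
    (h : ∀ᶠ t in 𝓝[<] x, C t * (x - t) ≤ F x - F t) : C x ≤ d := by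
  refine le_of_tendsto_of_tendsto (hC.tendsto.mono_left nhdsWithin_le_nhds)
    (hF.tendsto_slope.mono_left (nhdsLT_le_nhdsNE x)) ?_
  filter_upwards [h, self_mem_nhdsWithin] with t ht htx
  rw [slope_def_field, le_div_iff_of_neg (sub_neg.2 htx)]
  linarith

theorem norm_one_sub_inner_sq_div_le_re_inner_fderiv {f g : E → E}
    (hf : DifferentiableOn ℂ f (ball 0 1)) (hmaps : MapsTo f (ball 0 1) (ball 0 1)) {p : E}
    (hp : ‖p‖ = 1) {U : Set E} (hUopen : IsOpen U) (hpU : p ∈ U) (hg : DifferentiableAt ℂ g p)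
    (hfg : EqOn f g (ball 0 1 ∩ U)) (hgp : g p = p) :
    ‖1 - ⟪p, f 0⟫_ℂ‖ ^ 2 / (1 - ‖f 0‖ ^ 2) ≤ (⟪p, fderiv ℂ g p p⟫_ℂ).re := by
  have hray : Continuous (fun t : ℝ => p + t • p) := by fun_prop
  have hgray : ContinuousAt (fun t : ℝ => g (p + t • p)) 0 :=
    hg.continuousAt.comp_of_eq hray.continuousAt (by simp)
  have hC : ContinuousAt (fun t : ℝ =>
      ‖1 - ⟪g (p + t • p), f 0⟫_ℂ‖ ^ 2 / (1 - ‖f 0‖ ^ 2) * (1 + t / 2)) 0 :=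
    (((continuousAt_const.sub (hgray.inner continuousAt_const)).norm.pow 2).div_const _).mul
      (by fun_prop)
  have hU : ∀ᶠ t in 𝓝 (0 : ℝ), p + t • p ∈ U :=
    hray.continuousAt.preimage_mem_nhds (hUopen.mem_nhds (by simpa using hpU))
  have hbound : ∀ᶠ t in 𝓝[<] (0 : ℝ),
      ‖1 - ⟪g (p + t • p), f 0⟫_ℂ‖ ^ 2 / (1 - ‖f 0‖ ^ 2) * (1 + t / 2) * (0 - t)
        ≤ ‖g (p + (0 : ℝ) • p)‖ - ‖g (p + t • p)‖ := by
    -- the Schwarz–Pick bound at `(1 + t) p`, as `(1 - (1 + t)²) / 2 = (1 + t / 2) (0 - t)`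
    filter_upwards [nhdsWithin_le_nhds hU, nhdsWithin_le_nhds (eventually_gt_nhds neg_one_lt_zero),
      self_mem_nhdsWithin] with t htU ht1 (ht0 : t < 0)
    have hz : ‖p + t • p‖ = 1 + t := by
      rw [show p + t • p = (1 + t) • p by rw [add_smul, one_smul], norm_smul, hp, mul_one,
        Real.norm_of_nonneg (by linarith)]
    have hzball : ‖p + t • p‖ < 1 := by rw [hz]; linarith
    have hpick := norm_one_sub_inner_sq_div_mul_le_of_mapsTo_ball hf hmaps hzball
    rw [hfg ⟨mem_ball_zero_iff.2 hzball, htU⟩, hz] at hpick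
    simp only [zero_smul, add_zero, hgp, hp]
    linear_combination hpick
  simpa [hgp] using
    (hasDerivAt_norm_comp_add_smul_self hg hgp hp).le_of_eventually_mul_le_sub_nhdsLT hC hbound

theorem ball_boundary_schwarz_normal_derivative_general
    {n : ℕ}
    -- `f` is a holomorphic self-map of the unit ball `𝔹ⁿ`
    (f : EuclideanSpace ℂ (Fin n) → EuclideanSpace ℂ (Fin n))
    (hf : DifferentiableOn ℂ f (Metric.ball 0 1))
    (hfself : MapsTo f (Metric.ball 0 1) (Metric.ball 0 1))
    -- `f` is holomorphic at `p ∈ ∂𝔹ⁿ`: it extends holomorphically as `g` near `p`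
    (p : EuclideanSpace ℂ (Fin n)) (hp : ‖p‖ = 1)
    (g : EuclideanSpace ℂ (Fin n) → EuclideanSpace ℂ (Fin n))
    (U : Set (EuclideanSpace ℂ (Fin n))) (hUopen : IsOpen U) (hpU : p ∈ U)
    (hg : DifferentiableOn ℂ g U) (hfg : EqOn f g (Metric.ball 0 1 ∩ U))
    (hgp : g p = p)
    :
    Tendsto (fun t : ℝ => (‖g (p + t • p)‖ - ‖g p‖) / t) (nhdsWithin 0 {0}ᶜ)
      (nhds ((inner ℂ p (fderiv ℂ g p p) : ℂ).re)) ∧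
    ‖(1 : ℂ) - (inner ℂ p (f 0) : ℂ)‖ ^ 2 / (1 - ‖f 0‖ ^ 2) ≤
      (inner ℂ p (fderiv ℂ g p p) : ℂ).re ∧
    0 < ‖(1 : ℂ) - (inner ℂ p (f 0) : ℂ)‖ ^ 2 / (1 - ‖f 0‖ ^ 2) := by
  have hgd : DifferentiableAt ℂ g p := hg.differentiableAt (hUopen.mem_nhds hpU)
  have hf0 : ‖f 0‖ < 1 := mem_ball_zero_iff.1 (hfself (mem_ball_self one_pos))
  have hne : ⟪p, f 0⟫_ℂ ≠ 1 := inner_ne_one_of_norm_mul_norm_lt_one (by rwa [hp, one_mul])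
  refine ⟨?_, norm_one_sub_inner_sq_div_le_re_inner_fderiv hf hfself hp hUopen hpU hgd hfg hgp, ?_⟩
  · simpa [div_eq_inv_mul] using
      hasDerivAt_iff_tendsto_slope_zero.1 (hasDerivAt_norm_comp_add_smul_self hgd hgp hp)
  · have hden : 0 < 1 - ‖f 0‖ ^ 2 := by nlinarith [norm_nonneg (f 0)]
    exact div_pos (pow_pos (norm_pos_iff.2 (sub_ne_zero.2 hne.symm)) 2) hden

/-- **Boundary Schwarz lemma on the ball, part (i).**  With `λ := Re⟨J_f(p)p, p⟩`:
the directional derivative of `|f|` at `p` in the direction `p` exists and equals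
`λ`, and `λ ≥ |1 − ⟨f(0), p⟩|²/(1 − |f(0)|²) > 0`. -/
theorem ball_boundary_schwarz_normal_derivative
    {n : ℕ} (hn : 1 ≤ n)
    -- `f` is a holomorphic self-map of the unit ball `𝔹ⁿ`
    (f : EuclideanSpace ℂ (Fin n) → EuclideanSpace ℂ (Fin n))
    (hf : DifferentiableOn ℂ f (Metric.ball 0 1))
    (hfself : MapsTo f (Metric.ball 0 1) (Metric.ball 0 1))
    -- `f` is holomorphic at `p ∈ ∂𝔹ⁿ`: it extends holomorphically as `g` near `p`
    (p : EuclideanSpace ℂ (Fin n)) (hp : ‖p‖ = 1)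
    (g : EuclideanSpace ℂ (Fin n) → EuclideanSpace ℂ (Fin n))
    (U : Set (EuclideanSpace ℂ (Fin n))) (hUopen : IsOpen U) (hpU : p ∈ U)
    (hg : DifferentiableOn ℂ g U) (hfg : EqOn f g (Metric.ball 0 1 ∩ U))
    (hgp : g p = p)
    :
    Tendsto (fun t : ℝ => (‖g (p + t • p)‖ - ‖g p‖) / t) (nhdsWithin 0 {0}ᶜ)
      (nhds ((inner ℂ p (fderiv ℂ g p p) : ℂ).re)) ∧
    ‖(1 : ℂ) - (inner ℂ p (f 0) : ℂ)‖ ^ 2 / (1 - ‖f 0‖ ^ 2) ≤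
      (inner ℂ p (fderiv ℂ g p p) : ℂ).re ∧
    0 < ‖(1 : ℂ) - (inner ℂ p (f 0) : ℂ)‖ ^ 2 / (1 - ‖f 0‖ ^ 2) :=
  ball_boundary_schwarz_normal_derivative_general f hf hfself p hp g U hUopen hpU hg hfg hgp
end

section
/- Let f : 𝔹ⁿ → 𝔹ⁿ be holomorphic, holomorphic at p ∈ ∂𝔹ⁿ, with f(p) = p, and set λ := Re⟨J_f(p)p, p⟩. Then λ > 0 and p is an eigenvector of the conjugate-transpose matrix with eigenvalue λ: \overline{J_f(p)}^t p = λ p. -/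
open Metric Set Filter

noncomputable section

section AuxBoundarySchwarz
open Complex

lemma aux_no_fast_vanish {F : ℂ → ℂ} (hd : DifferentiableOn ℂ F (ball 0 1))
    (hre : ∀ z ∈ ball (0:ℂ) 1, 0 < (F z).re)
    (hlim : Tendsto (fun r : ℝ => ‖F (r:ℂ)‖ / (1 - r)) (nhdsWithin 1 (Iio 1)) (nhds 0)) :
    False := by
  have h0 : (0:ℂ) ∈ ball (0:ℂ) 1 := by simp
  set c : ℂ := F 0 with hc
  have hcre : 0 < c.re := hre 0 h0
  have hden : ∀ z ∈ ball (0:ℂ) 1, 0 < (F z + (starRingEnd ℂ) c).re := by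
    intro z hz
    simp only [Complex.add_re, Complex.conj_re]
    exact add_pos (hre z hz) hcre
  set B : ℂ → ℂ := fun z => (F z - c) / (F z + (starRingEnd ℂ) c) with hB
  have hdenne : ∀ z ∈ ball (0:ℂ) 1, F z + (starRingEnd ℂ) c ≠ 0 := by
    intro z hz h
    have := hden z hz
    rw [h] at this; simp at this
  have hkey : ∀ z ∈ ball (0:ℂ) 1, ‖F z - c‖ < ‖F z + (starRingEnd ℂ) c‖ := by
    intro z hz
    have h1 : ‖F z - c‖ ^ 2 < ‖F z + (starRingEnd ℂ) c‖ ^ 2 := by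
      rw [Complex.sq_norm, Complex.sq_norm]
      simp only [Complex.normSq_apply, Complex.sub_re, Complex.sub_im, Complex.add_re,
        Complex.add_im, Complex.conj_re, Complex.conj_im]
      nlinarith [hre z hz, hcre]
    nlinarith [norm_nonneg (F z - c), norm_nonneg (F z + (starRingEnd ℂ) c)]
  have hBmaps : MapsTo B (ball 0 1) (ball (0:ℂ) 1) := by
    intro z hz
    rw [mem_ball_zero_iff, hB, norm_div, div_lt_one]
    · exact hkey z hz
    · exact (norm_nonneg _).lt_of_ne' (by simpa using hdenne z hz)
  have hBd : DifferentiableOn ℂ B (ball 0 1) :=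
    (hd.sub (differentiableOn_const c)).div
      (hd.add (differentiableOn_const _)) hdenne
  have hB0 : B 0 = 0 := by simp [hB, hc]
  have hSchwarz : ∀ z ∈ ball (0:ℂ) 1, ‖B z‖ ≤ ‖z‖ := by
    intro z hz
    have := Complex.norm_le_norm_of_mapsTo_ball hBd
      (hBmaps.mono_right ball_subset_closedBall) hB0 (by simpa [mem_ball_zero_iff] using hz)
    simpa using this
  -- derive the quantitative bound for real r ∈ (0,1)
  have hineq : ∀ r : ℝ, r ∈ Ioo (0:ℝ) 1 → ‖c‖ / 2 ≤ ‖F (r:ℂ)‖ / (1 - r) := by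
    intro r hr
    have hrball : (r:ℂ) ∈ ball (0:ℂ) 1 := by
      simp [mem_ball_zero_iff, Complex.norm_real, abs_lt]
      constructor <;> nlinarith [hr.1, hr.2]
    have h1 : ‖F r - c‖ ≤ r * ‖F r + (starRingEnd ℂ) c‖ := by
      have := hSchwarz _ hrball
      rw [hB, norm_div, div_le_iff₀ (by
        exact (norm_nonneg _).lt_of_ne' (by simpa using hdenne _ hrball))] at this
      calc ‖F ↑r - c‖ ≤ ‖(r:ℂ)‖ * ‖F ↑r + (starRingEnd ℂ) c‖ := this
        _ = r * ‖F ↑r + (starRingEnd ℂ) c‖ := by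
            rw [Complex.norm_real, Real.norm_eq_abs, abs_of_pos hr.1]
    have h2 : ‖F ↑r + (starRingEnd ℂ) c‖ ≤ ‖F ↑r‖ + ‖c‖ := by
      calc ‖F ↑r + (starRingEnd ℂ) c‖ ≤ ‖F ↑r‖ + ‖(starRingEnd ℂ) c‖ := norm_add_le _ _
        _ = ‖F ↑r‖ + ‖c‖ := by rw [RCLike.norm_conj]
    have h3 : ‖c‖ ≤ ‖F ↑r - c‖ + ‖F ↑r‖ := by
      calc ‖c‖ = ‖F ↑r - (F ↑r - c)‖ := by congr 1; ring
        _ ≤ ‖F ↑r‖ + ‖F ↑r - c‖ := norm_sub_le _ _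
        _ = ‖F ↑r - c‖ + ‖F ↑r‖ := by ring
    rw [div_le_div_iff₀ (by norm_num) (by linarith [hr.2])]
    nlinarith [hr.1, hr.2, norm_nonneg (F (r:ℂ))]
  have hev : ∀ᶠ (r : ℝ) in nhdsWithin (1:ℝ) (Iio 1), ‖c‖ / 2 ≤ ‖F (r:ℂ)‖ / (1 - r) := by
    filter_upwards [Ioo_mem_nhdsLT_of_mem (by norm_num : (1:ℝ) ∈ Ioc 0 1)] with r hr
    exact hineq r hr
  have : ‖c‖ / 2 ≤ 0 := ge_of_tendsto hlim hev
  have : c = 0 := by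
    rw [← norm_eq_zero]
    nlinarith [norm_nonneg c]
  rw [this] at hcre; simp at hcre

lemma aux_tangential {E : Type*} [NormedAddCommGroup E] [InnerProductSpace ℂ E]
    {u : E → ℝ} {D : E →L[ℝ] ℝ} {p : E} (hp : ‖p‖ = 1)
    (hu : HasFDerivAt u D p) (hup : u p = 1)
    (hle : ∀ᶠ z in nhds p, z ∈ ball (0:E) 1 → u z ≤ 1)
    {v : E} (hv : ‖v‖ ≤ 1) (hvp : (inner ℂ p v : ℂ).re = 0) : D v = 0 := by
  set c : ℝ → E := fun t => (1 - t^2) • (p + t • v) with hcdef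
  have hc0 : c 0 = p := by simp [hcdef]
  have hc : HasDerivAt c v 0 := by
    have h1 : HasDerivAt (fun t : ℝ => (1:ℝ) - t^2) 0 0 := by
      simpa using (hasDerivAt_pow 2 (0:ℝ)).const_sub (1:ℝ)
    have h2 : HasDerivAt (fun t : ℝ => p + t • v) v 0 := by
      simpa using ((hasDerivAt_id' (0:ℝ)).smul_const v).const_add p
    have h3 := h1.smul h2
    rw [hcdef]
    convert h3 using 2
    all_goals simp
  have hball : ∀ t : ℝ, 0 < |t| → |t| < 1 → c t ∈ ball (0:E) 1 := by
    intro t ht0 ht1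
    rw [mem_ball_zero_iff, hcdef]
    have htv : t • v = ((t:ℝ):ℂ) • v := (RCLike.real_smul_eq_coe_smul (K := ℂ) t v)
    have hns : ‖p + t • v‖^2 = 1 + t^2 * ‖v‖^2 := by
      rw [@norm_add_sq ℂ, htv, inner_smul_right]
      simp [hp, norm_smul, hvp, mul_pow, Complex.re_ofReal_mul]
    have h2 : (0:ℝ) < t^2 := by nlinarith [_root_.sq_abs t, ht0]
    have h3 : t^2 < 1 := by nlinarith [_root_.sq_abs t, ht1, abs_nonneg t]
    have h4 : ‖v‖^2 ≤ 1 := by nlinarith [norm_nonneg v]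
    have h1 : ‖(1 - t^2) • (p + t • v)‖^2 < 1 := by
      rw [norm_smul, mul_pow, hns, Real.norm_eq_abs, _root_.sq_abs]
      have key : (1-t^2)^2 * (1 + t^2*‖v‖^2) ≤ (1-t^2)^2 * (1+t^2) := by
        nlinarith [mul_le_mul_of_nonneg_left h4 (mul_nonneg (sq_nonneg (1-t^2)) (sq_nonneg t))]
      nlinarith [key, h2, mul_pos (mul_pos h2 h2) (sub_pos.mpr h3)]
    nlinarith [norm_nonneg ((1 - t^2) • (p + t • v))]
  have hmax : IsLocalMax (u ∘ c) 0 := by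
    have hcont : Tendsto c (nhds 0) (nhds p) := by
      rw [← hc0]; exact hc.continuousAt.tendsto
    have hev : ∀ᶠ t : ℝ in nhds 0, (c t ∈ ball (0:E) 1 → u (c t) ≤ 1) :=
      hcont.eventually hle
    have hsmall : ∀ᶠ t : ℝ in nhds 0, |t| < 1 := by
      have := eventually_abs_sub_lt (0:ℝ) one_pos
      simpa using this
    filter_upwards [hev, hsmall] with t h1 h2
    rcases eq_or_ne t 0 with rfl | ht
    · simp
    · have : u (c t) ≤ 1 := h1 (hball t (abs_pos.mpr ht) h2)
      simpa [Function.comp, hc0, hup] using this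
  have hD : HasDerivAt (u ∘ c) (D v) 0 := by
    refine HasFDerivAt.comp_hasDerivAt 0 ?_ hc
    rwa [hc0]
  exact hmax.hasDerivAt_eq_zero hD

lemma aux_radial {E : Type*} [NormedAddCommGroup E] [InnerProductSpace ℂ E]
    {u : E → ℝ} {D : E →L[ℝ] ℝ} {p : E} (hp : ‖p‖ = 1)
    (hu : HasFDerivAt u D p) (hup : u p = 1)
    (hle : ∀ᶠ z in nhds p, z ∈ ball (0:E) 1 → u z ≤ 1) : 0 ≤ D p := by
  set c : ℝ → E := fun t => (1 - t) • p with hcdef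
  have hc0 : c 0 = p := by simp [hcdef]
  have hc : HasDerivAt c (-p) 0 := by
    have h1 : HasDerivAt (fun t : ℝ => (1:ℝ) - t) (-1) 0 := by
      simpa using (hasDerivAt_id' (0:ℝ)).const_sub (1:ℝ)
    have := h1.smul_const p
    simpa using this
  have hφ : HasDerivAt (u ∘ c) (-(D p)) 0 := by
    have := HasFDerivAt.comp_hasDerivAt 0 (hc0 ▸ hu) hc
    simpa using this
  have htend : Tendsto (slope (u ∘ c) 0) (nhdsWithin 0 (Ioi 0)) (nhds (-(D p))) :=
    (hasDerivAt_iff_tendsto_slope.mp hφ).mono_left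
      (nhdsWithin_mono 0 (fun x hx => ne_of_gt hx))
  have hcont : Tendsto c (nhds 0) (nhds p) := by
    rw [← hc0]; exact hc.continuousAt.tendsto
  have hev : ∀ᶠ t : ℝ in nhdsWithin 0 (Ioi 0), slope (u ∘ c) 0 t ≤ 0 := by
    have h1 : ∀ᶠ t : ℝ in nhds 0, (c t ∈ ball (0:E) 1 → u (c t) ≤ 1) :=
      hcont.eventually hle
    have h2 : ∀ᶠ t : ℝ in nhds 0, |t| < 1 := by
      simpa using eventually_abs_sub_lt (0:ℝ) one_pos
    filter_upwards [eventually_nhdsWithin_of_eventually_nhds (h1.and h2),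
      self_mem_nhdsWithin] with t ⟨h1t, h2t⟩ ht
    have htpos : 0 < t := ht
    have hcball : c t ∈ ball (0:E) 1 := by
      rw [mem_ball_zero_iff, hcdef, norm_smul, hp, Real.norm_eq_abs]
      rw [mul_one, abs_lt]
      rw [abs_lt] at h2t
      exact ⟨by linarith [h2t.1, h2t.2], by linarith [h2t.1, h2t.2]⟩
    have hule : u (c t) ≤ 1 := h1t hcball
    rw [slope_def_field]
    have : (u ∘ c) t - (u ∘ c) 0 ≤ 0 := by
      simp only [Function.comp_apply, hc0, hup]; linarith
    exact div_nonpos_of_nonpos_of_nonneg this (by linarith)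
  have : -(D p) ≤ 0 := le_of_tendsto htend hev
  linarith

end AuxBoundarySchwarz

set_option maxHeartbeats 1000000 in
/-- **Boundary Schwarz lemma on the ball, part (ii).**  With
`λ := Re⟨J_f(p)p, p⟩`: `λ > 0` and `p` is an eigenvector of the conjugate
transpose `\overline{J_f(p)}^t` with eigenvalue `λ`. -/
theorem ball_boundary_schwarz_adjoint_eigenvector
    {n : ℕ} (hn : 1 ≤ n)
    -- `f` is a holomorphic self-map of the unit ball `𝔹ⁿ`
    (f : EuclideanSpace ℂ (Fin n) → EuclideanSpace ℂ (Fin n))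
    (hf : DifferentiableOn ℂ f (Metric.ball 0 1))
    (hfself : MapsTo f (Metric.ball 0 1) (Metric.ball 0 1))
    -- `f` is holomorphic at `p ∈ ∂𝔹ⁿ`: it extends holomorphically as `g` near `p`
    (p : EuclideanSpace ℂ (Fin n)) (hp : ‖p‖ = 1)
    (g : EuclideanSpace ℂ (Fin n) → EuclideanSpace ℂ (Fin n))
    (U : Set (EuclideanSpace ℂ (Fin n))) (hUopen : IsOpen U) (hpU : p ∈ U)
    (hg : DifferentiableOn ℂ g U) (hfg : EqOn f g (Metric.ball 0 1 ∩ U))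
    (hgp : g p = p)
    :
    0 < (inner ℂ p (fderiv ℂ g p p) : ℂ).re ∧
    ContinuousLinearMap.adjoint (fderiv ℂ g p) p =
      (((inner ℂ p (fderiv ℂ g p p) : ℂ).re : ℂ)) • p := by
  set L : EuclideanSpace ℂ (Fin n) →L[ℂ] EuclideanSpace ℂ (Fin n) := fderiv ℂ g p with hLdef
  have hgd : DifferentiableAt ℂ g p := hg.differentiableAt (hUopen.mem_nhds hpU)
  have hL : HasFDerivAt g L p := hgd.hasFDerivAt
  have hpp : (inner ℂ p p : ℂ) = 1 := by
    rw [inner_self_eq_norm_sq_to_K, hp]; norm_num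
  -- the real-part function and its derivative
  set u : EuclideanSpace ℂ (Fin n) → ℝ := fun z => (inner ℂ p (g z) : ℂ).re with hudef
  set D : EuclideanSpace ℂ (Fin n) →L[ℝ] ℝ :=
    Complex.reCLM.comp (((innerSL ℂ p).comp L).restrictScalars ℝ) with hDdef
  have hu : HasFDerivAt u D p := by
    have hψ : HasFDerivAt (fun z => (inner ℂ p (g z) : ℂ)) ((innerSL ℂ p).comp L) p :=
      ((innerSL ℂ p).hasFDerivAt).comp p hL
    exact (Complex.reCLM.hasFDerivAt).comp p (hψ.restrictScalars ℝ)
  have hDv : ∀ v : EuclideanSpace ℂ (Fin n), D v = (inner ℂ p (L v) : ℂ).re := fun v => rfl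
  have hup : u p = 1 := by
    rw [hudef]; simp only [hgp, hpp]; simp
  have hle : ∀ᶠ z in nhds p, z ∈ ball (0 : EuclideanSpace ℂ (Fin n)) 1 → u z ≤ 1 := by
    filter_upwards [hUopen.mem_nhds hpU] with z hzU hzb
    have hgz : g z = f z := (hfg ⟨hzb, hzU⟩).symm
    have h1 : ‖f z‖ < 1 := mem_ball_zero_iff.mp (hfself hzb)
    rw [hudef]
    simp only [hgz]
    calc (inner ℂ p (f z) : ℂ).re ≤ ‖(inner ℂ p (f z) : ℂ)‖ := Complex.re_le_norm _
      _ = ‖(inner ℂ p (f z) : ℂ)‖ := rfl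
      _ ≤ ‖p‖ * ‖f z‖ := norm_inner_le_norm p (f z)
      _ = ‖f z‖ := by rw [hp, one_mul]
      _ ≤ 1 := h1.le
  -- tangential derivatives vanish
  have t0 : ∀ v : EuclideanSpace ℂ (Fin n), (inner ℂ p v : ℂ).re = 0 → (inner ℂ p (L v) : ℂ).re = 0 := by
    intro v hv
    rcases eq_or_ne v 0 with rfl | hv0
    · simp
    · have hvn : (0:ℝ) < ‖v‖ := norm_pos_iff.mpr hv0
      set w := ‖v‖⁻¹ • v with hwdef
      have hw1 : ‖w‖ ≤ 1 := by
        rw [hwdef, norm_smul, Real.norm_eq_abs, abs_of_pos (by positivity)]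
        rw [inv_mul_cancel₀ hvn.ne']
      have hwsmul : w = ((‖v‖⁻¹ : ℝ) : ℂ) • v := by
        rw [hwdef]; exact RCLike.real_smul_eq_coe_smul (K := ℂ) _ _
      have hwp : (inner ℂ p w : ℂ).re = 0 := by
        rw [hwsmul, inner_smul_right, Complex.re_ofReal_mul, hv, mul_zero]
      have hDw : D w = 0 := aux_tangential hp hu hup hle hw1 hwp
      have : D w = ‖v‖⁻¹ * D v := by
        rw [hwdef, map_smul, smul_eq_mul]
      rw [this] at hDw
      have := mul_eq_zero.mp hDw
      rcases this with h | h
      · exact absurd h (by positivity)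
      · rw [← hDv v]; exact h
  -- imaginary part of ⟪p, L p⟫ vanishes
  have him : (inner ℂ p (L p) : ℂ).im = 0 := by
    have h0 : (inner ℂ p ((Complex.I : ℂ) • p) : ℂ).re = 0 := by
      rw [inner_smul_right, hpp, mul_one, Complex.I_re]
    have h1 := t0 ((Complex.I : ℂ) • p) h0
    rw [map_smul, inner_smul_right] at h1
    simpa [Complex.mul_re] using h1
  -- complex-orthogonal vectors are annihilated
  have t2 : ∀ v : EuclideanSpace ℂ (Fin n), (inner ℂ p v : ℂ) = 0 → (inner ℂ p (L v) : ℂ) = 0 := by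
    intro v hv
    have hre : (inner ℂ p (L v) : ℂ).re = 0 := t0 v (by rw [hv]; simp)
    have him2 : (inner ℂ p (L v) : ℂ).im = 0 := by
      have h0 : (inner ℂ p ((Complex.I : ℂ) • v) : ℂ).re = 0 := by
        rw [inner_smul_right, hv, mul_zero]; simp
      have h1 := t0 ((Complex.I : ℂ) • v) h0
      rw [map_smul, inner_smul_right] at h1
      simpa [Complex.mul_re, hre] using h1
    exact Complex.ext hre him2
  set lam : ℂ := (inner ℂ p (L p) : ℂ) with hlamdef
  set lam0 : ℝ := lam.re with hlam0def
  have hlamre : lam = (lam0 : ℂ) := by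
    apply Complex.ext
    · simp [hlam0def]
    · simp [him, hlam0def]
  have hge : 0 ≤ lam0 := by
    have := aux_radial hp hu hup hle
    rwa [hDv p] at this
  -- strict positivity
  have hpos : 0 < lam0 := by
    rcases hge.lt_or_eq with h | h
    · exact h
    · exfalso
      have hlam_zero : lam = 0 := by rw [hlamre, ← h]; simp
      -- build the disk function
      set F : ℂ → ℂ := fun z => 1 - (inner ℂ p (f (z • p)) : ℂ) with hFdef
      have hmap : MapsTo (fun z : ℂ => z • p) (ball (0:ℂ) 1) (ball (0 : EuclideanSpace ℂ (Fin n)) 1) := by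
        intro z hz
        rw [mem_ball_zero_iff] at hz ⊢
        rw [norm_smul, hp, mul_one]
        exact hz
      have hFd : DifferentiableOn ℂ F (ball 0 1) := by
        have hin : DifferentiableOn ℂ (fun z : ℂ => f (z • p)) (ball 0 1) :=
          hf.comp ((differentiable_id.smul_const p).differentiableOn) hmap
        have h2 : DifferentiableOn ℂ (fun z : ℂ => (inner ℂ p (f (z • p)) : ℂ)) (ball 0 1) :=
          ((innerSL ℂ p).differentiable).comp_differentiableOn hin
        exact (differentiableOn_const 1).sub h2
      have hre : ∀ z ∈ ball (0:ℂ) 1, 0 < (F z).re := by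
        intro z hz
        have h1 : ‖f (z • p)‖ < 1 := mem_ball_zero_iff.mp (hfself (hmap hz))
        have h2 : (inner ℂ p (f (z • p)) : ℂ).re < 1 := by
          calc (inner ℂ p (f (z • p)) : ℂ).re ≤ ‖(inner ℂ p (f (z • p)) : ℂ)‖ := by
                exact Complex.re_le_norm _
            _ ≤ ‖p‖ * ‖f (z • p)‖ := norm_inner_le_norm _ _
            _ < 1 := by rw [hp, one_mul]; exact h1
        rw [hFdef]
        simp only [Complex.sub_re, Complex.one_re]
        linarith
      -- the radial limit
      set G : ℝ → ℂ := fun r => 1 - (inner ℂ p (g (((r:ℝ):ℂ) • p)) : ℂ) with hGdef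
      have hG1 : G 1 = 0 := by
        rw [hGdef]; simp only [Complex.ofReal_one, one_smul, hgp, hpp]; simp
      have hGd : HasDerivAt G 0 1 := by
        have h0 : HasDerivAt (fun r : ℝ => ((r:ℝ):ℂ)) 1 1 := by
          have h0' := Complex.ofRealCLM.hasDerivAt (x := (1:ℝ)); simp at h0'; exact h0'
        have h1 : HasDerivAt (fun r : ℝ => ((r:ℝ):ℂ) • p) p 1 := by
          simpa using h0.smul_const p
        have h2 : HasDerivAt (fun r : ℝ => g (((r:ℝ):ℂ) • p)) (L p) 1 := by
          have hL' : HasFDerivAt g (L.restrictScalars ℝ) (((1:ℝ):ℂ) • p) := by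
            rw [show (((1:ℝ):ℂ) • p) = p by simp]
            exact hL.restrictScalars ℝ
          have h2' := HasFDerivAt.comp_hasDerivAt 1 hL' h1; simp at h2'; exact h2'
        have h3 : HasDerivAt (fun r : ℝ => (inner ℂ p (g (((r:ℝ):ℂ) • p)) : ℂ)) lam 1 := by
          have hinner : HasFDerivAt (fun x : EuclideanSpace ℂ (Fin n) => (inner ℂ p x : ℂ))
              (((innerSL ℂ p).restrictScalars ℝ)) (g (((1:ℝ):ℂ) • p)) :=
            ((innerSL ℂ p).hasFDerivAt).restrictScalars ℝ
          have := HasFDerivAt.comp_hasDerivAt 1 hinner h2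
          simp [hlamdef] at this; exact this
        have h4 : HasDerivAt G (0 - lam) 1 :=
          (hasDerivAt_const (1:ℝ) (1:ℂ)).sub h3
        rwa [hlam_zero, sub_zero] at h4
      have hslope : Tendsto (slope G 1) (nhdsWithin 1 (Iio 1)) (nhds 0) :=
        (hasDerivAt_iff_tendsto_slope.mp hGd).mono_left
          (nhdsWithin_mono 1 (fun x hx => ne_of_lt hx))
      have hnorm : Tendsto (fun r : ℝ => ‖slope G 1 r‖) (nhdsWithin 1 (Iio 1)) (nhds 0) := by
        have := hslope.norm
        simpa using this
      have hlim : Tendsto (fun r : ℝ => ‖F (r:ℂ)‖ / (1 - r)) (nhdsWithin 1 (Iio 1)) (nhds 0) := by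
        apply hnorm.congr'
        have hUev : ∀ᶠ r : ℝ in nhdsWithin 1 (Iio 1), ((r:ℝ):ℂ) • p ∈ U := by
          have hcont : Tendsto (fun r : ℝ => ((r:ℝ):ℂ) • p) (nhdsWithin 1 (Iio 1)) (nhds p) := by
            have : Tendsto (fun r : ℝ => ((r:ℝ):ℂ) • p) (nhds 1) (nhds p) := by
              have hc : Continuous (fun r : ℝ => ((r:ℝ):ℂ) • p) :=
                Complex.continuous_ofReal.smul continuous_const
              have := hc.tendsto 1
              simpa using this
            exact this.mono_left nhdsWithin_le_nhds
          exact hcont.eventually (hUopen.mem_nhds hpU)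
        filter_upwards [hUev, Ioo_mem_nhdsLT_of_mem
          (by norm_num : (1:ℝ) ∈ Ioc (0:ℝ) (1:ℝ))] with r hrU hr
        have hrball : ((r:ℝ):ℂ) • p ∈ ball (0 : EuclideanSpace ℂ (Fin n)) 1 := by
          rw [mem_ball_zero_iff, norm_smul, hp, mul_one, Complex.norm_real,
            Real.norm_eq_abs, abs_of_pos hr.1]
          exact hr.2
        have hFG : F (r:ℂ) = G r := by
          rw [hFdef, hGdef]
          simp only [sub_right_inj]
          rw [hfg ⟨hrball, hrU⟩]
        rw [slope_def_module, hG1, sub_zero, ← hFG, norm_smul]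
        rw [norm_inv, Real.norm_eq_abs, abs_of_neg (by linarith [hr.2] : r - 1 < 0)]
        rw [div_eq_inv_mul, neg_sub]
      exact aux_no_fast_vanish hFd hre hlim
  refine ⟨hpos, ?_⟩
  -- the eigenvector identity
  apply ext_inner_right ℂ
  intro w
  rw [ContinuousLinearMap.adjoint_inner_left]
  set a : ℂ := (inner ℂ p w : ℂ) with hadef
  set w' := w - a • p with hw'def
  have hw'p : (inner ℂ p w' : ℂ) = 0 := by
    rw [hw'def, inner_sub_right, inner_smul_right, hpp, mul_one, hadef, sub_self]
  have hw : w = a • p + w' := by rw [hw'def]; abel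
  have hLw : (inner ℂ p (L w) : ℂ) = a * lam := by
    rw [hw, map_add, map_smul, inner_add_right, inner_smul_right, t2 w' hw'p,
      add_zero, hlamdef]
  rw [hLw, inner_smul_left, Complex.conj_ofReal, hlamre]
  ring
end
end

section
/- Let f : 𝔹ⁿ → 𝔹ⁿ be holomorphic, holomorphic at p ∈ ∂𝔹ⁿ, with f(p) = p. If f has an interior fixed point z₀ ∈ 𝔹ⁿ (i.e. f(z₀) = z₀), then λ := Re⟨J_f(p)p, p⟩ satisfies λ ≥ 1. -/
open Metric Set Filter Topology
noncomputable section
namespace BallSchwarzAux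
variable {E : Type*} [NormedAddCommGroup E] [InnerProductSpace ℂ E]

lemma one_sub_inner_ne_zero' {a z : E} (h2 : ‖a‖ * ‖z‖ < 1) :
    (1 : ℂ) - (inner ℂ a z : ℂ) ≠ 0 := by
  intro h
  have h1 : (inner ℂ a z : ℂ) = 1 := by linear_combination -h
  have h3 : ‖(inner ℂ a z : ℂ)‖ ≤ ‖a‖ * ‖z‖ := norm_inner_le_norm a z
  rw [h1] at h3
  simp only [norm_one] at h3
  linarith

lemma one_sub_inner_ne_zero {a z : E} (ha : ‖a‖ < 1) (hz : ‖z‖ < 1) :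
    (1 : ℂ) - (inner ℂ a z : ℂ) ≠ 0 := by
  intro h
  have h1 : (inner ℂ a z : ℂ) = 1 := by linear_combination -h
  have h2 : ‖(inner ℂ a z : ℂ)‖ ≤ ‖a‖ * ‖z‖ := norm_inner_le_norm a z
  rw [h1] at h2
  simp only [norm_one] at h2
  nlinarith [norm_nonneg a, norm_nonneg z]

lemma schwarz_ball {F : E → E} (hF : DifferentiableOn ℂ F (ball 0 1))
    (hmaps : MapsTo F (ball 0 1) (ball 0 1)) (hF0 : F 0 = 0)
    {w : E} (hw : w ∈ ball 0 1) : ‖F w‖ ≤ ‖w‖ := by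
  rcases eq_or_ne w 0 with rfl | hw0
  · simp [hF0]
  · have hwn : (‖w‖ : ℝ) ≠ 0 := norm_ne_zero_iff.2 hw0
    set u : E := ((‖w‖ : ℂ))⁻¹ • w with hu
    have hun : ‖u‖ = 1 := by
      rw [hu, norm_smul, norm_inv]
      simp only [Complex.norm_real, Real.norm_eq_abs, abs_norm]
      field_simp
    set G : ℂ → E := fun ζ => F (ζ • u) with hG
    have hmem : MapsTo (fun ζ : ℂ => ζ • u) (ball (0:ℂ) 1) (ball (0:E) 1) := by
      intro ζ hζ
      rw [mem_ball_zero_iff] at *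
      rw [norm_smul, hun, mul_one]; exact hζ
    have hGd : DifferentiableOn ℂ G (ball 0 1) :=
      hF.comp ((differentiable_id.smul_const u).differentiableOn) hmem
    have hG0 : G 0 = 0 := by simp [hG, hF0]
    have hGm : MapsTo G (ball 0 1) (ball (G 0) 1) := by
      rw [hG0]; intro ζ hζ; exact hmaps (hmem hζ)
    have hz : ((‖w‖ : ℝ) : ℂ) ∈ ball (0:ℂ) 1 := by
      rw [mem_ball_zero_iff]
      simpa using mem_ball_zero_iff.1 hw
    have hdist := Complex.dist_le_div_mul_dist_of_mapsTo_ball hGd (hGm.mono_right ball_subset_closedBall) hz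
    rw [hG0] at hdist
    have hGw : G ((‖w‖ : ℝ) : ℂ) = F w := by
      rw [hG]
      simp only
      rw [hu, smul_smul, mul_inv_cancel₀ (by exact_mod_cast hwn), one_smul]
    rw [hGw] at hdist
    simpa [dist_zero_right, Complex.norm_real] using hdist

def mobS (a : E) : ℝ := Real.sqrt (1 - ‖a‖^2)

def mob (a z : E) : E :=
  ((1:ℂ) - (inner ℂ a z : ℂ))⁻¹ •
    ((((1:ℂ) - (((1 - mobS a) / ‖a‖^2 : ℝ) : ℂ) * (inner ℂ a z : ℂ))) • a
      - ((mobS a : ℝ) : ℂ) • z)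

lemma inner_self_c (a : E) : (inner ℂ a a : ℂ) = ((‖a‖^2 : ℝ) : ℂ) := by
  rw [inner_self_eq_norm_sq_to_K]; norm_cast

lemma mob_zero (a : E) : mob a 0 = a := by
  simp [mob]

lemma mob_self {a : E} (ha0 : a ≠ 0) : mob a a = 0 := by
  have hr0 : ((‖a‖:ℂ)) ≠ 0 := by exact_mod_cast norm_ne_zero_iff.2 ha0
  rw [mob, inner_self_c]
  have h1 : ((1:ℂ) - (((1 - mobS a) / ‖a‖^2 : ℝ) : ℂ) * ((‖a‖^2 : ℝ) : ℂ)) = ((mobS a : ℝ) : ℂ) := by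
    push_cast
    field_simp
    ring
  rw [h1, sub_self, smul_zero]

lemma mob_inner {a : E} (ha0 : a ≠ 0) (z : E) :
    (inner ℂ a (mob a z) : ℂ)
      = ((1:ℂ) - (inner ℂ a z : ℂ))⁻¹ * (((‖a‖^2 : ℝ) : ℂ) - (inner ℂ a z : ℂ)) := by
  have hr0 : ((‖a‖:ℂ)) ≠ 0 := by exact_mod_cast norm_ne_zero_iff.2 ha0
  rw [mob, inner_smul_right, inner_sub_right, inner_smul_right, inner_smul_right,
    inner_self_c]
  push_cast
  field_simp
  ring

lemma mob_normSq {a : E} (ha0 : a ≠ 0) (ha : ‖a‖ < 1) (z : E)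
    (hα : (1:ℂ) - (inner ℂ a z : ℂ) ≠ 0) :
    ‖mob a z‖^2 * Complex.normSq ((1:ℂ) - (inner ℂ a z : ℂ))
      = Complex.normSq ((1:ℂ) - (inner ℂ a z : ℂ)) - (1 - ‖a‖^2) * (1 - ‖z‖^2) := by
  have h1r : (0:ℝ) < 1 - ‖a‖^2 := by nlinarith [norm_nonneg a, ha]
  have hs2 : (mobS a)^2 = 1 - ‖a‖^2 := Real.sq_sqrt h1r.le
  have hs0 : 0 < mobS a := Real.sqrt_pos.2 h1r
  have hrs : (‖a‖^2 : ℝ) = 1 - (mobS a)^2 := by linarith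
  have hr0 : (‖a‖^2 : ℝ) ≠ 0 := pow_ne_zero _ (norm_ne_zero_iff.2 ha0)
  have hss : (1:ℝ) - (mobS a)^2 ≠ 0 := by rw [← hrs]; exact hr0
  have habs : ∀ c : ℂ, ‖c‖^2 = Complex.normSq c := fun c => by
    rw [Complex.sq_norm]
  have hn0 : Complex.normSq (1 - (inner ℂ a z : ℂ)) ≠ 0 := (Complex.normSq_pos.2 hα).ne'
  rw [mob, norm_smul, mul_pow, norm_inv, inv_pow, habs]
  rw [show ∀ X : ℝ, (Complex.normSq (1-(inner ℂ a z : ℂ)))⁻¹ * X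
        * Complex.normSq (1-(inner ℂ a z : ℂ)) = X from
    fun X => by field_simp]
  rw [norm_sub_sq (𝕜 := ℂ), inner_smul_left, inner_smul_right, norm_smul, norm_smul,
    mul_pow, mul_pow, habs]
  rw [hrs]
  simp only [map_sub, map_one, map_mul, Complex.conj_ofReal, RCLike.re_to_complex,
    Complex.normSq_apply, Complex.sub_re, Complex.sub_im, Complex.mul_re, Complex.mul_im,
    Complex.one_re, Complex.one_im, Complex.ofReal_re, Complex.ofReal_im,
    Complex.conj_re, Complex.conj_im]
  field_simp
  rw [Complex.norm_real, Real.norm_eq_abs, abs_of_pos hs0]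
  ring

lemma mob_mob {a : E} (ha0 : a ≠ 0) (ha : ‖a‖ < 1) {z : E} (hz : ‖z‖ < 1) :
    mob a (mob a z) = z := by
  have hα : (1:ℂ) - (inner ℂ a z : ℂ) ≠ 0 := one_sub_inner_ne_zero ha hz
  have h1r : (0:ℝ) < 1 - ‖a‖^2 := by nlinarith [norm_nonneg a, ha]
  have hs2 : (mobS a)^2 = 1 - ‖a‖^2 := Real.sq_sqrt h1r.le
  have hs0 : (0:ℝ) < mobS a := Real.sqrt_pos.2 h1r
  have hrs : (‖a‖^2 : ℝ) = 1 - (mobS a)^2 := by linarith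
  have hr0 : (‖a‖^2 : ℝ) ≠ 0 := pow_ne_zero _ (norm_ne_zero_iff.2 ha0)
  have hsC : ((mobS a : ℝ) : ℂ) ≠ 0 := by exact_mod_cast hs0.ne'
  have hssC : (1:ℂ) - ((mobS a : ℝ) : ℂ)^2 ≠ 0 := by
    intro h
    have h' : ((1 - (mobS a)^2 : ℝ) : ℂ) = 0 := by push_cast; linear_combination h
    exact hr0 (by rw [hrs]; exact_mod_cast h')
  have hXeq : (1:ℂ) - (1 - (inner ℂ a z : ℂ))⁻¹ * (((‖a‖^2 : ℝ) : ℂ) - (inner ℂ a z : ℂ))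
      = (1 - (inner ℂ a z : ℂ))⁻¹ * (1 - ((‖a‖^2 : ℝ) : ℂ)) := by
    field_simp
    ring
  conv_lhs => rw [mob]
  rw [mob_inner ha0, hXeq]
  conv_lhs => rw [mob]
  rw [hrs]
  push_cast
  match_scalars
  · field_simp
    ring
  · field_simp
    ring

lemma mob_lt_one {a : E} (ha0 : a ≠ 0) (ha : ‖a‖ < 1) {z : E} (hz : ‖z‖ < 1) :
    ‖mob a z‖ < 1 := by
  have hα := one_sub_inner_ne_zero ha hz
  have hid := mob_normSq ha0 ha z hα
  have hd : 0 < Complex.normSq (1 - (inner ℂ a z : ℂ)) := Complex.normSq_pos.2 hα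
  have h1 : 0 < (1 - ‖a‖^2) * (1 - ‖z‖^2) :=
    mul_pos (by nlinarith [norm_nonneg a] : (0:ℝ) < 1 - ‖a‖^2)
      (by nlinarith [norm_nonneg z] : (0:ℝ) < 1 - ‖z‖^2)
  have h2 : ‖mob a z‖^2 < 1 := by nlinarith [hid, h1, hd]
  exact (pow_lt_one_iff_of_nonneg (norm_nonneg (mob a z)) two_ne_zero).1 h2

lemma mob_diffOn {a : E} (ha : ‖a‖ < 1) : DifferentiableOn ℂ (mob a) (ball 0 1) := by
  intro z hz
  have hα : (1:ℂ) - (inner ℂ a z : ℂ) ≠ 0 := one_sub_inner_ne_zero ha (mem_ball_zero_iff.1 hz)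
  apply DifferentiableAt.differentiableWithinAt
  have hinner : DifferentiableAt ℂ (fun w : E => (inner ℂ a w : ℂ)) z := by
    have := ((innerSL ℂ a).differentiable).differentiableAt (x := z)
    simpa using this
  have h1 : DifferentiableAt ℂ (fun w : E => (1:ℂ) - (inner ℂ a w : ℂ)) z :=
    (differentiableAt_const _).sub hinner
  exact (h1.inv hα).smul
    ((((differentiableAt_const _).sub (hinner.const_mul _)).smul_const a).sub
      (differentiableAt_id.const_smul _))

lemma key {a : E} (ha : ‖a‖ < 1) {f : E → E} (hf : DifferentiableOn ℂ f (ball 0 1))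
    (hm : MapsTo f (ball 0 1) (ball 0 1)) (hfa : f a = a) {z : E} (hz : ‖z‖ < 1) :
    (1 - ‖z‖^2) * Complex.normSq (1 - (inner ℂ a (f z) : ℂ))
      ≤ (1 - ‖f z‖^2) * Complex.normSq (1 - (inner ℂ a z : ℂ)) := by
  have hzb : z ∈ ball (0:E) 1 := mem_ball_zero_iff.2 hz
  have hfz : ‖f z‖ < 1 := mem_ball_zero_iff.1 (hm hzb)
  rcases eq_or_ne a 0 with rfl | ha0
  · simp only [inner_zero_left, sub_zero, Complex.normSq_one, mul_one]
    have := schwarz_ball hf hm hfa hzb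
    nlinarith [norm_nonneg (f z), norm_nonneg z]
  · have mobmaps : MapsTo (mob a) (ball (0:E) 1) (ball (0:E) 1) := fun w hw =>
      mem_ball_zero_iff.2 (mob_lt_one ha0 ha (mem_ball_zero_iff.1 hw))
    set F : E → E := fun w => mob a (f (mob a w)) with hF
    have hFd : DifferentiableOn ℂ F (ball 0 1) :=
      (mob_diffOn ha).comp (hf.comp (mob_diffOn ha) mobmaps) (fun w hw => hm (mobmaps hw))
    have hFm : MapsTo F (ball 0 1) (ball 0 1) := fun w hw => mobmaps (hm (mobmaps hw))
    have hF0 : F 0 = 0 := by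
      rw [hF]; simp only; rw [mob_zero, hfa, mob_self ha0]
    have hsch := schwarz_ball hFd hFm hF0 (mobmaps hzb)
    have hFv : F (mob a z) = mob a (f z) := by
      rw [hF]; simp only; rw [mob_mob ha0 ha hz]
    rw [hFv] at hsch
    have hαz := one_sub_inner_ne_zero ha hz
    have hαf := one_sub_inner_ne_zero ha hfz
    have id1 := mob_normSq ha0 ha (f z) hαf
    have id2 := mob_normSq ha0 ha z hαz
    have hd1 : 0 < Complex.normSq (1 - (inner ℂ a (f z) : ℂ)) := Complex.normSq_pos.2 hαf
    have hd2 : 0 < Complex.normSq (1 - (inner ℂ a z : ℂ)) := Complex.normSq_pos.2 hαz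
    have h1r : (0:ℝ) < 1 - ‖a‖^2 := by nlinarith [norm_nonneg a]
    have hM : ‖mob a (f z)‖^2 ≤ ‖mob a z‖^2 := by
      nlinarith [hsch, norm_nonneg (mob a (f z))]
    have h : (1 - ‖a‖^2) * ((1 - ‖z‖^2) * Complex.normSq (1 - (inner ℂ a (f z) : ℂ)))
        ≤ (1 - ‖a‖^2) * ((1 - ‖f z‖^2) * Complex.normSq (1 - (inner ℂ a z : ℂ))) := by
      have e1 : (1 - ‖a‖^2) * (1 - ‖f z‖^2)
          = Complex.normSq (1 - (inner ℂ a (f z) : ℂ)) * (1 - ‖mob a (f z)‖^2) := by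
        linear_combination id1
      have e2 : (1 - ‖a‖^2) * (1 - ‖z‖^2)
          = Complex.normSq (1 - (inner ℂ a z : ℂ)) * (1 - ‖mob a z‖^2) := by
        linear_combination id2
      nlinarith [e1, e2, hM, hd1, hd2,
        mul_le_mul_of_nonneg_left hM (mul_nonneg hd1.le hd2.le)]
    exact le_of_mul_le_mul_left h h1r

end BallSchwarzAux

open BallSchwarzAux

set_option maxHeartbeats 1000000 in
/-- **Boundary Schwarz lemma on the ball, interior fixed point.**  If `f` has an
interior fixed point `z₀ ∈ 𝔹ⁿ`, then `λ := Re⟨J_f(p)p, p⟩ ≥ 1`. -/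
theorem ball_boundary_schwarz_interior_fixed_point
    {n : ℕ} (hn : 1 ≤ n)
    -- `f` is a holomorphic self-map of the unit ball `𝔹ⁿ`
    (f : EuclideanSpace ℂ (Fin n) → EuclideanSpace ℂ (Fin n))
    (hf : DifferentiableOn ℂ f (Metric.ball 0 1))
    (hfself : MapsTo f (Metric.ball 0 1) (Metric.ball 0 1))
    -- `f` is holomorphic at `p ∈ ∂𝔹ⁿ`: it extends holomorphically as `g` near `p`
    (p : EuclideanSpace ℂ (Fin n)) (hp : ‖p‖ = 1)
    (g : EuclideanSpace ℂ (Fin n) → EuclideanSpace ℂ (Fin n))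
    (U : Set (EuclideanSpace ℂ (Fin n))) (hUopen : IsOpen U) (hpU : p ∈ U)
    (hg : DifferentiableOn ℂ g U) (hfg : EqOn f g (Metric.ball 0 1 ∩ U))
    (hgp : g p = p)
    (z₀ : EuclideanSpace ℂ (Fin n)) (hz₀ : z₀ ∈ Metric.ball (0 : EuclideanSpace ℂ (Fin n)) 1)
    (hfz₀ : f z₀ = z₀) :
    1 ≤ (inner ℂ p (fderiv ℂ g p p) : ℂ).re := by
  have hz₀n : ‖z₀‖ < 1 := mem_ball_zero_iff.1 hz₀
  have hgd : DifferentiableAt ℂ g p := (hg p hpU).differentiableAt (hUopen.mem_nhds hpU)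
  set J := fderiv ℂ g p with hJ
  have hc : HasDerivAt (fun ζ : ℂ => ζ • p) p 1 := by
    simpa using (hasDerivAt_id (1:ℂ)).smul_const p
  have hgd' : HasFDerivAt g J ((1:ℂ) • p) := by rw [one_smul]; exact hgd.hasFDerivAt
  have hgc : HasDerivAt (fun ζ : ℂ => g (ζ • p)) (J p) 1 := hgd'.comp_hasDerivAt 1 hc
  have hφ : HasDerivAt (fun ζ : ℂ => (inner ℂ p (g (ζ • p)) : ℂ)) ((inner ℂ p (J p) : ℂ)) 1 := by
    have h2 := (innerSL ℂ p).hasFDerivAt.comp_hasDerivAt 1 hgc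
    exact h2
  set ψ : ℝ → ℝ := fun t => ((inner ℂ p (g (((t:ℝ):ℂ) • p)) : ℂ)).re with hψdef
  have hψ : HasDerivAt ψ ((inner ℂ p (J p) : ℂ)).re 1 := hφ.real_of_complex
  have hsp : ((1:ℝ):ℂ) • p = p := by norm_num
  have hψ1 : ψ 1 = 1 := by
    simp only [hψdef, Complex.ofReal_one, one_smul, hgp, inner_self_c, hp]
    norm_num
  have hslope : Tendsto (slope ψ 1) (𝓝[<] (1:ℝ)) (𝓝 ((inner ℂ p (J p) : ℂ)).re) := by
    have := hasDerivAt_iff_tendsto_slope.1 hψ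
    exact this.mono_left (nhdsWithin_mono 1 fun x hx => ne_of_lt hx)
  set B : ℝ → ℝ := fun t =>
    ((1 + t) * Complex.normSq (1 - (inner ℂ z₀ (g (((t:ℝ):ℂ) • p)) : ℂ)))
      / (2 * Complex.normSq (1 - (inner ℂ z₀ (((t:ℝ):ℂ) • p) : ℂ))) with hB
  have hcont : ContinuousAt (fun t : ℝ => ((t:ℝ):ℂ) • p) 1 :=
    (Complex.continuous_ofReal.smul continuous_const).continuousAt
  have hnp : Complex.normSq (1 - (inner ℂ z₀ p : ℂ)) ≠ 0 :=
    (Complex.normSq_pos.2 (one_sub_inner_ne_zero' (by rw [hp]; simpa using hz₀n))).ne'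
  -- tendsto of B
  have hB1 : Tendsto B (𝓝[<] (1:ℝ)) (𝓝 1) := by
    have hqc : ContinuousAt (fun t : ℝ => g (((t:ℝ):ℂ) • p)) 1 := by
      refine ContinuousAt.comp ?_ hcont
      rw [hsp]; exact hgd.continuousAt
    have hinq : ContinuousAt
        (fun t : ℝ => Complex.normSq (1 - (inner ℂ z₀ (g (((t:ℝ):ℂ) • p)) : ℂ))) 1 := by
      exact Complex.continuous_normSq.continuousAt.comp
        (ContinuousAt.sub continuousAt_const
          (ContinuousAt.comp ((innerSL ℂ z₀).continuous.continuousAt) hqc))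
    have hind : ContinuousAt
        (fun t : ℝ => Complex.normSq (1 - (inner ℂ z₀ (((t:ℝ):ℂ) • p) : ℂ))) 1 := by
      exact Complex.continuous_normSq.continuousAt.comp
        (ContinuousAt.sub continuousAt_const
          (ContinuousAt.comp ((innerSL ℂ z₀).continuous.continuousAt) hcont))
    have hnum : ContinuousAt (fun t : ℝ =>
        (1 + t) * Complex.normSq (1 - (inner ℂ z₀ (g (((t:ℝ):ℂ) • p)) : ℂ))) 1 :=
      (continuousAt_const.add continuousAt_id).mul hinq
    have hden : ContinuousAt (fun t : ℝ =>
        2 * Complex.normSq (1 - (inner ℂ z₀ (((t:ℝ):ℂ) • p) : ℂ))) 1 :=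
      continuousAt_const.mul hind
    have hdenne : (fun t : ℝ =>
        2 * Complex.normSq (1 - (inner ℂ z₀ (((t:ℝ):ℂ) • p) : ℂ))) 1 ≠ 0 := by
      simp only [hsp]
      exact mul_ne_zero two_ne_zero hnp
    have hBc : ContinuousAt B 1 := hnum.div hden hdenne
    have hBval : B 1 = 1 := by
      have h2 : B 1 = (2 * Complex.normSq (1 - (inner ℂ z₀ p : ℂ)))
          / (2 * Complex.normSq (1 - (inner ℂ z₀ p : ℂ))) := by
        simp only [hB, Complex.ofReal_one, one_smul, hgp]
        ring_nf
      rw [h2, div_self (mul_ne_zero two_ne_zero hnp)]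
    have := hBc.tendsto
    rw [hBval] at this
    exact this.mono_left nhdsWithin_le_nhds
  -- eventual inequality
  have hev : ∀ᶠ t in 𝓝[<] (1:ℝ), B t ≤ slope ψ 1 t := by
    have hUev : ∀ᶠ t : ℝ in 𝓝 (1:ℝ), ((t:ℝ):ℂ) • p ∈ U :=
      hcont (hUopen.mem_nhds (by simp only [Complex.ofReal_one, one_smul]; exact hpU))
    filter_upwards [hUev.filter_mono nhdsWithin_le_nhds,
      (eventually_gt_nhds (by norm_num : (0:ℝ) < 1)).filter_mono nhdsWithin_le_nhds,
      self_mem_nhdsWithin] with t htU ht0 ht1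
    replace ht1 : t < 1 := ht1
    have hzn : ‖((t:ℝ):ℂ) • p‖ = t := by
      rw [norm_smul, hp, mul_one, Complex.norm_real, Real.norm_eq_abs, abs_of_pos ht0]
    have hzb : ((t:ℝ):ℂ) • p ∈ ball (0 : EuclideanSpace ℂ (Fin n)) 1 :=
      mem_ball_zero_iff.2 (by rw [hzn]; exact ht1)
    have hfg' : f (((t:ℝ):ℂ) • p) = g (((t:ℝ):ℂ) • p) := hfg ⟨hzb, htU⟩
    have hkey := key hz₀n hf hfself hfz₀ (show ‖((t:ℝ):ℂ) • p‖ < 1 by rw [hzn]; exact ht1)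
    rw [hfg', hzn] at hkey
    have hfzlt : ‖g (((t:ℝ):ℂ) • p)‖ < 1 := by
      rw [← hfg']; exact mem_ball_zero_iff.1 (hfself hzb)
    have hre : ((inner ℂ p (g (((t:ℝ):ℂ) • p)) : ℂ)).re ≤ ‖g (((t:ℝ):ℂ) • p)‖ := by
      calc ((inner ℂ p (g (((t:ℝ):ℂ) • p)) : ℂ)).re
          ≤ ‖(inner ℂ p (g (((t:ℝ):ℂ) • p)) : ℂ)‖ := Complex.re_le_norm _
        _ ≤ ‖p‖ * ‖g (((t:ℝ):ℂ) • p)‖ := norm_inner_le_norm _ _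
        _ = ‖g (((t:ℝ):ℂ) • p)‖ := by rw [hp, one_mul]
    have hQd : 0 < Complex.normSq (1 - (inner ℂ z₀ (((t:ℝ):ℂ) • p) : ℂ)) := by
      apply Complex.normSq_pos.2
      apply one_sub_inner_ne_zero'
      rw [hzn]
      nlinarith [norm_nonneg z₀]
    have hQn : 0 ≤ Complex.normSq (1 - (inner ℂ z₀ (g (((t:ℝ):ℂ) • p)) : ℂ)) :=
      Complex.normSq_nonneg _
    have hψt : ψ t = ((inner ℂ p (g (((t:ℝ):ℂ) • p)) : ℂ)).re := rfl
    rw [slope_def_field, hψ1, hψt]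
    have hflip : (ψ t - 1)/(t - 1) = (1 - ψ t)/(1 - t) := by
      rw [div_eq_div_iff (by linarith) (by linarith)]; ring
    rw [hψt] at hflip
    rw [hflip]
    rw [hB]
    simp only
    rw [div_le_div_iff₀ (mul_pos two_pos hQd) (by linarith : (0:ℝ) < 1 - t)]
    have haux : (1 - ‖g (((t:ℝ):ℂ) • p)‖) * (1 + ‖g (((t:ℝ):ℂ) • p)‖)
        ≤ 2 * (1 - ((inner ℂ p (g (((t:ℝ):ℂ) • p)) : ℂ)).re) := by
      nlinarith [hre, hfzlt, sq_nonneg (1 - ‖g (((t:ℝ):ℂ) • p)‖)]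
    nlinarith [hkey, mul_le_mul_of_nonneg_right haux hQd.le, hQn, hQd,
      norm_nonneg (g (((t:ℝ):ℂ) • p)), ht0, ht1]
  exact le_of_tendsto_of_tendsto hB1 hslope hev
end
end

section
/- Let f : 𝔹ⁿ → 𝔹ⁿ be holomorphic, holomorphic at p ∈ ∂𝔹ⁿ, with f(p) = p. If all eigenvalues of the Jacobian matrix J_f(p) have modulus strictly less than one, then there exists k₀ ∈ ℕ such that the sequence of iterates {f^{k k₀}}_{k∈ℕ} converges locally uniformly on 𝔹ⁿ to the constant map p. -/
open Metric Set Filter Topology ComplexConjugate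

/-!
Let `A = J_g(p)`. Its spectral radius is `< 1`, so by Gelfand's formula `‖A ^ m‖ < 1` for some
`m`, and `g^[m]` contracts a small ball around `p` towards `p`. On the part of that ball inside
`𝔹ⁿ` the map `f^[m]` agrees with `g^[m]`, so some orbit of `f^[m]` in `𝔹ⁿ` converges to `p`.

Convergence at a single point `w` spreads to locally uniform convergence. For a holomorphic
self-map `F` of `𝔹ⁿ`, the function `z ↦ ⟪p, F z⟫` maps `𝔹ⁿ` into the unit disc, and the
Schwarz–Pick lemma (comparing `z` and `w` with the origin) gives the Harnack-type bound
`(1 - r)² |1 - ⟪p, F z⟫| ≤ (1 + r)² |1 - ⟪p, F w⟫|` for `‖z‖, ‖w‖ ≤ r`. Finally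
`‖p - F z‖² ≤ 2 |1 - ⟪p, F z⟫|` because `‖p‖ = 1` and `‖F z‖ < 1`.
-/

theorem ContinuousLinearMap.exists_norm_pow_lt_one {E : Type*} [NormedAddCommGroup E]
    [NormedSpace ℂ E] [FiniteDimensional ℂ E] (A : E →L[ℂ] E)
    (hA : ∀ μ, Module.End.HasEigenvalue (A : E →ₗ[ℂ] E) μ → ‖μ‖ < 1) :
    ∃ m : ℕ, ‖A ^ m‖ < 1 := by
  rcases subsingleton_or_nontrivial E with hE | hE
  · exact ⟨0, by simp⟩
  have hrad : spectralRadius ℂ A < 1 := by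
    refine mod_cast spectrum.spectralRadius_lt_of_forall_lt A (r := 1) fun μ hμ => ?_
    rw [ContinuousLinearMap.spectrum_eq, ← Module.End.hasEigenvalue_iff_mem_spectrum] at hμ
    exact mod_cast hA μ hμ
  obtain ⟨m, hm, hm0⟩ := ((spectrum.pow_nnnorm_pow_one_div_tendsto_nhds_spectralRadius A
    ).eventually_lt_const hrad |>.and (eventually_gt_atTop 0)).exists
  have hm' : (‖A ^ m‖₊ : ENNReal) < 1 :=
    not_le.1 fun h => (ENNReal.one_le_rpow h (by positivity)).not_gt hm
  exact ⟨m, mod_cast hm'⟩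

theorem HasFDerivAt.eventually_norm_sub_le {𝕜 E F : Type*} [NontriviallyNormedField 𝕜]
    [NormedAddCommGroup E] [NormedSpace 𝕜 E] [NormedAddCommGroup F] [NormedSpace 𝕜 F]
    {G : E → F} {B : E →L[𝕜] F} {p : E} (hG : HasFDerivAt G B p) {c : ℝ} (hc : ‖B‖ < c) :
    ∀ᶠ z in 𝓝 p, ‖G z - G p‖ ≤ c * ‖z - p‖ := by
  filter_upwards [hG.isLittleO.bound (sub_pos.2 hc)] with z hz
  calc ‖G z - G p‖ ≤ ‖G z - G p - B (z - p)‖ + ‖B (z - p)‖ := norm_le_norm_sub_add _ _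
    _ ≤ (c - ‖B‖) * ‖z - p‖ + ‖B‖ * ‖z - p‖ := add_le_add hz (B.le_opNorm _)
    _ = c * ‖z - p‖ := by ring

theorem Function.iterate_eq_of_eqOn {α : Type*} {f g : α → α} {s U : Set α} (hf : MapsTo f s s)
    (hfg : EqOn f g (s ∩ U)) {z : α} (hz : z ∈ s) :
    ∀ m : ℕ, (∀ j < m, g^[j] z ∈ U) → f^[m] z = g^[m] z
  | 0, _ => rfl
  | m + 1, hU => by
    have ih := Function.iterate_eq_of_eqOn hf hfg hz m fun j hj => hU j (by omega)
    rw [iterate_succ_apply', iterate_succ_apply', ih,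
      hfg ⟨ih ▸ hf.iterate m hz, hU m (by omega)⟩]

theorem tendsto_iterate_of_dist_le_mul {α : Type*} [PseudoMetricSpace α] {T : α → α} {V : Set α}
    (hV : MapsTo T V V) {p : α} {c : ℝ} (hc0 : 0 ≤ c) (hc1 : c < 1)
    (hT : ∀ z ∈ V, dist (T z) p ≤ c * dist z p) {z : α} (hz : z ∈ V) :
    Tendsto (fun k => T^[k] z) atTop (𝓝 p) := by
  have hbound (k : ℕ) : dist (T^[k] z) p ≤ c ^ k * dist z p := by
    induction k with
    | zero => simp
    | succ k ih =>
      rw [Function.iterate_succ_apply', pow_succ', mul_assoc]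
      exact (hT _ (hV.iterate k hz)).trans (mul_le_mul_of_nonneg_left ih hc0)
  refine tendsto_iff_dist_tendsto_zero.2 (squeeze_zero (fun _ => dist_nonneg) hbound ?_)
  simpa using (tendsto_pow_atTop_nhds_zero_of_lt_one hc0 hc1).mul_const (dist z p)

theorem exists_tendsto_iterate_of_norm_fderiv_pow_lt_one {𝕜 E : Type*}
    [NontriviallyNormedField 𝕜] [NormedAddCommGroup E] [NormedSpace 𝕜 E] {f g : E → E}
    {s U : Set E} (hfs : MapsTo f s s) (hfg : EqOn f g (s ∩ U)) {p : E} (hps : p ∈ closure s)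
    (hU : U ∈ 𝓝 p) (hg : DifferentiableAt 𝕜 g p) (hgp : g p = p) {m : ℕ}
    (hm : ‖fderiv 𝕜 g p ^ m‖ < 1) :
    ∃ w ∈ s, Tendsto (fun k => (f^[m])^[k] w) atTop (𝓝 p) := by
  obtain ⟨c, hmc, hc1⟩ := exists_between hm
  have hcontr := (hg.hasFDerivAt.iterate hgp m).eventually_norm_sub_le hmc
  have hstay : ∀ᶠ z in 𝓝 p, ∀ j < m, g^[j] z ∈ U := by
    refine (eventually_all_finite (finite_lt_nat m)).2 fun j _ => ?_
    exact (hg.continuousAt.iterate hgp j).preimage_mem_nhds (by rwa [Function.iterate_fixed hgp])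
  obtain ⟨δ, hδ, hball⟩ := Metric.eventually_nhds_iff_ball.1 (hcontr.and hstay)
  -- Near `p` the first `m` steps of an `f`-orbit in `s` are steps of `g`.
  have hfm {z} (hz : z ∈ s ∩ ball p δ) : dist (f^[m] z) p ≤ c * dist z p := by
    rw [Function.iterate_eq_of_eqOn hfs hfg hz.1 m (hball z hz.2).2, dist_eq_norm, dist_eq_norm]
    simpa only [Function.iterate_fixed hgp m] using (hball z hz.2).1
  have hc0 : 0 ≤ c := (norm_nonneg _).trans hmc.le
  have hmaps : MapsTo f^[m] (s ∩ ball p δ) (s ∩ ball p δ) := fun z hz =>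
    ⟨hfs.iterate m hz.1, mem_ball.2 ((hfm hz).trans_lt
      ((mul_le_of_le_one_left dist_nonneg hc1.le).trans_lt hz.2))⟩
  obtain ⟨w, hws, hwp⟩ := Metric.mem_closure_iff.1 hps δ hδ
  exact ⟨w, hws, tendsto_iterate_of_dist_le_mul hmaps hc0 hc1 (fun _ => hfm)
    ⟨hws, mem_ball'.2 hwp⟩⟩

noncomputable def moebius (b z : ℂ) : ℂ := (b - z) / (1 - conj b * z)

@[simp]
lemma moebius_self (b : ℂ) : moebius b b = 0 := by simp [moebius]

lemma norm_moebius_comm (a b : ℂ) : ‖moebius a b‖ = ‖moebius b a‖ := by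
  rw [moebius, moebius, norm_div, norm_div, norm_sub_rev a b, ← RCLike.norm_conj (1 - conj a * b)]
  simp [mul_comm]

lemma one_sub_conj_mul_ne_zero {b z : ℂ} (hb : ‖b‖ < 1) (hz : ‖z‖ < 1) :
    1 - conj b * z ≠ 0 := by
  refine sub_ne_zero.2 fun h => ?_
  have : ‖conj b * z‖ < 1 := by
    rw [norm_mul, RCLike.norm_conj]
    nlinarith [norm_nonneg b, norm_nonneg z]
  simp [← h] at this

lemma norm_one_sub_conj_mul_sq_sub_norm_sub_sq (b z : ℂ) :
    ‖1 - conj b * z‖ ^ 2 - ‖b - z‖ ^ 2 = (1 - ‖b‖ ^ 2) * (1 - ‖z‖ ^ 2) := by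
  simp only [Complex.sq_norm, Complex.normSq_apply, Complex.sub_re, Complex.sub_im,
    Complex.mul_re, Complex.mul_im, Complex.one_re, Complex.one_im, Complex.conj_re,
    Complex.conj_im]
  ring

lemma mapsTo_moebius {b : ℂ} (hb : ‖b‖ < 1) : MapsTo (moebius b) (ball 0 1) (ball 0 1) := by
  intro z hz
  rw [mem_ball_zero_iff] at hz ⊢
  rw [moebius, norm_div, div_lt_one (norm_pos_iff.2 (one_sub_conj_mul_ne_zero hb hz))]
  have hid := norm_one_sub_conj_mul_sq_sub_norm_sub_sq b z
  have : 0 < (1 - ‖b‖ ^ 2) * (1 - ‖z‖ ^ 2) := by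
    apply mul_pos <;> nlinarith [norm_nonneg b, norm_nonneg z]
  nlinarith [norm_nonneg (b - z), norm_nonneg (1 - conj b * z)]

lemma differentiableOn_moebius {b : ℂ} (hb : ‖b‖ < 1) :
    DifferentiableOn ℂ (moebius b) (ball 0 1) :=
  DifferentiableOn.div (by fun_prop) (by fun_prop) fun z hz =>
    one_sub_conj_mul_ne_zero hb (mem_ball_zero_iff.1 hz)

lemma sub_mul_norm_one_sub_le_of_norm_moebius_le {a b : ℂ} {s : ℝ} (ha : ‖a‖ < 1) (hb : ‖b‖ < 1)
    (hs : ‖moebius b a‖ ≤ s) : (1 - s) * ‖1 - a‖ ≤ (1 + s) * ‖1 - b‖ := by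
  have hden := norm_pos_iff.2 (one_sub_conj_mul_ne_zero hb ha)
  rw [moebius, norm_div, div_le_iff₀ hden] at hs
  have hsplit : ‖1 - conj b * a‖ ≤ ‖1 - a‖ + ‖1 - b‖ := by
    calc ‖1 - conj b * a‖ = ‖(1 - a) + conj (1 - b) * a‖ := by congr 1; simp; ring
      _ ≤ ‖1 - a‖ + ‖1 - b‖ * ‖a‖ := by
        grw [norm_add_le, norm_mul, RCLike.norm_conj]
      _ ≤ ‖1 - a‖ + ‖1 - b‖ := by
        gcongr; exact mul_le_of_le_one_right (norm_nonneg _) ha.le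
  have htri : ‖1 - a‖ ≤ ‖1 - b‖ + ‖b - a‖ := by
    simpa using norm_sub_le_norm_sub_add_norm_sub (1 : ℂ) b a
  have hs0 : 0 ≤ s := nonneg_of_mul_nonneg_left ((norm_nonneg _).trans hs) hden
  nlinarith [mul_le_mul_of_nonneg_left hsplit hs0]

section NormedSpace

variable {E : Type*} [NormedAddCommGroup E] [NormedSpace ℂ E]

theorem norm_moebius_le_of_mapsTo_ball {q : E → ℂ} (hd : DifferentiableOn ℂ q (ball 0 1))
    (hq : MapsTo q (ball 0 1) (ball 0 1)) {z : E} (hz : ‖z‖ < 1) :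
    ‖moebius (q 0) (q z)‖ ≤ ‖z‖ := by
  have hq0 : ‖q 0‖ < 1 := mem_ball_zero_iff.1 (hq (mem_ball_self one_pos))
  refine Complex.norm_le_norm_of_mapsTo_ball (f := moebius (q 0) ∘ q)
    ((differentiableOn_moebius hq0).comp hd hq) ?_ (moebius_self _) hz
  exact ((mapsTo_moebius hq0).comp hq).mono_right ball_subset_closedBall

theorem one_sub_sq_mul_norm_one_sub_le_of_mapsTo_ball {q : E → ℂ}
    (hd : DifferentiableOn ℂ q (ball 0 1)) (hq : MapsTo q (ball 0 1) (ball 0 1)) {r : ℝ}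
    (hr : r < 1) {z w : E} (hz : ‖z‖ ≤ r) (hw : ‖w‖ ≤ r) :
    (1 - r) ^ 2 * ‖1 - q z‖ ≤ (1 + r) ^ 2 * ‖1 - q w‖ := by
  have hnorm {x : E} (hx : ‖x‖ ≤ r) : ‖q x‖ < 1 :=
    mem_ball_zero_iff.1 (hq (mem_ball_zero_iff.2 (hx.trans_lt hr)))
  have h0 : ‖(0 : E)‖ ≤ r := norm_zero.trans_le ((norm_nonneg z).trans hz)
  have hz0 := sub_mul_norm_one_sub_le_of_norm_moebius_le (hnorm hz) (hnorm h0)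
    ((norm_moebius_le_of_mapsTo_ball hd hq (hz.trans_lt hr)).trans hz)
  have h0w := sub_mul_norm_one_sub_le_of_norm_moebius_le (hnorm h0) (hnorm hw)
    ((norm_moebius_comm _ _ ▸ norm_moebius_le_of_mapsTo_ball hd hq (hw.trans_lt hr)).trans hw)
  have hr0 : 0 ≤ 1 - r := by linarith
  have hr1 : 0 ≤ 1 + r := by linarith [(norm_nonneg z).trans hz]
  calc (1 - r) ^ 2 * ‖1 - q z‖ = (1 - r) * ((1 - r) * ‖1 - q z‖) := by ring
    _ ≤ (1 - r) * ((1 + r) * ‖1 - q 0‖) := by gcongr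
    _ = (1 + r) * ((1 - r) * ‖1 - q 0‖) := by ring
    _ ≤ (1 + r) * ((1 + r) * ‖1 - q w‖) := by gcongr
    _ = (1 + r) ^ 2 * ‖1 - q w‖ := by ring

end NormedSpace

section InnerProductSpace

variable {E : Type*} [NormedAddCommGroup E] [InnerProductSpace ℂ E]

lemma norm_sub_sq_le_two_mul_norm_one_sub_inner {p x : E} (hp : ‖p‖ = 1) (hx : ‖x‖ ≤ 1) :
    ‖p - x‖ ^ 2 ≤ 2 * ‖1 - inner ℂ p x‖ := by
  have hre : 1 - (inner ℂ p x).re ≤ ‖1 - inner ℂ p x‖ := by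
    simpa using Complex.re_le_norm (1 - inner ℂ p x)
  rw [@norm_sub_sq ℂ, hp, RCLike.re_to_complex]
  nlinarith [norm_nonneg x]

theorem one_sub_sq_mul_norm_sub_sq_le_of_mapsTo_ball {F : E → E}
    (hd : DifferentiableOn ℂ F (ball 0 1)) (hF : MapsTo F (ball 0 1) (ball 0 1)) {p : E}
    (hp : ‖p‖ = 1) {r : ℝ} (hr : r < 1) {z w : E} (hz : ‖z‖ ≤ r) (hw : ‖w‖ ≤ r) :
    (1 - r) ^ 2 * ‖p - F z‖ ^ 2 ≤ 2 * (1 + r) ^ 2 * ‖1 - inner ℂ p (F w)‖ := by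
  have hq : MapsTo (fun x => inner ℂ p (F x)) (ball 0 1) (ball 0 1) := fun x hx => by
    simpa using (norm_inner_le_norm p (F x)).trans_lt
      (by simpa [hp] using mem_ball_zero_iff.1 (hF hx))
  have harnack := one_sub_sq_mul_norm_one_sub_le_of_mapsTo_ball (q := fun x => inner ℂ p (F x))
    ((innerSL ℂ p).differentiable.comp_differentiableOn hd) hq hr hz hw
  have hFz : ‖F z‖ ≤ 1 := (mem_ball_zero_iff.1 (hF (mem_ball_zero_iff.2 (hz.trans_lt hr)))).le
  calc (1 - r) ^ 2 * ‖p - F z‖ ^ 2 ≤ (1 - r) ^ 2 * (2 * ‖1 - inner ℂ p (F z)‖) := by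
        gcongr; exact norm_sub_sq_le_two_mul_norm_one_sub_inner hp hFz
    _ ≤ 2 * (1 + r) ^ 2 * ‖1 - inner ℂ p (F w)‖ := by linarith

theorem tendstoLocallyUniformlyOn_ball_of_tendsto {ι : Type*} {l : Filter ι} {F : ι → E → E}
    (hd : ∀ i, DifferentiableOn ℂ (F i) (ball 0 1)) (hF : ∀ i, MapsTo (F i) (ball 0 1) (ball 0 1))
    {p : E} (hp : ‖p‖ = 1) {w : E} (hw : w ∈ ball 0 1) (hFw : Tendsto (fun i => F i w) l (𝓝 p)) :
    TendstoLocallyUniformlyOn F (fun _ => p) l (ball 0 1) := by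
  rw [Metric.tendstoLocallyUniformlyOn_iff]
  intro ε hε x hx
  obtain ⟨r, hxwr, hr⟩ := exists_between (max_lt (mem_ball_zero_iff.1 hx) (mem_ball_zero_iff.1 hw))
  have hr0 : 0 < 1 - r := by linarith
  have hr1 : 0 < 1 + r := by linarith [(norm_nonneg x).trans_lt ((le_max_left _ _).trans_lt hxwr)]
  refine ⟨closedBall 0 r, mem_nhdsWithin_of_mem_nhds (closedBall_mem_nhds_of_mem
    (mem_ball_zero_iff.2 ((le_max_left _ _).trans_lt hxwr))), ?_⟩
  have hinner : Tendsto (fun i => ‖1 - inner ℂ p (F i w)‖) l (𝓝 0) := by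
    have := ((innerSL ℂ p).continuous.tendsto p).comp hFw
    simp only [Function.comp_def, innerSL_apply_apply, inner_self_eq_norm_sq_to_K, hp] at this
    simpa using (tendsto_iff_norm_sub_tendsto_zero.1 this).congr fun i => norm_sub_rev _ _
  filter_upwards [hinner.eventually_lt_const (show 0 < (1 - r) ^ 2 * ε ^ 2 / (2 * (1 + r) ^ 2) by
    positivity)] with i hi y hy
  have hbound := one_sub_sq_mul_norm_sub_sq_le_of_mapsTo_ball (hd i) (hF i) hp hr
    (mem_closedBall_zero_iff.1 hy) ((le_max_right _ _).trans hxwr.le)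
  rw [lt_div_iff₀ (by positivity)] at hi
  have hsq : (1 - r) ^ 2 * ‖p - F i y‖ ^ 2 < (1 - r) ^ 2 * ε ^ 2 := by linarith
  rw [dist_eq_norm]
  exact lt_of_pow_lt_pow_left₀ 2 hε.le (lt_of_mul_lt_mul_left hsq (by positivity))

end InnerProductSpace

theorem ball_attracting_boundary_fixed_point_general
    {n : ℕ}
    -- `f` is a holomorphic self-map of the unit ball `𝔹ⁿ`
    (f : EuclideanSpace ℂ (Fin n) → EuclideanSpace ℂ (Fin n))
    (hf : DifferentiableOn ℂ f (Metric.ball 0 1))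
    (hfself : MapsTo f (Metric.ball 0 1) (Metric.ball 0 1))
    -- `f` is holomorphic at `p ∈ ∂𝔹ⁿ`: it extends holomorphically as `g` near `p`
    (p : EuclideanSpace ℂ (Fin n)) (hp : ‖p‖ = 1)
    (g : EuclideanSpace ℂ (Fin n) → EuclideanSpace ℂ (Fin n))
    (U : Set (EuclideanSpace ℂ (Fin n))) (hUopen : IsOpen U) (hpU : p ∈ U)
    (hg : DifferentiableOn ℂ g U) (hfg : EqOn f g (Metric.ball 0 1 ∩ U))
    (hgp : g p = p)
    -- all eigenvalues of `J_f(p)` have modulus strictly less than one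
    (heig : ∀ μ : ℂ,
      Module.End.HasEigenvalue
        ((fderiv ℂ g p : EuclideanSpace ℂ (Fin n) →L[ℂ] EuclideanSpace ℂ (Fin n)) :
          EuclideanSpace ℂ (Fin n) →ₗ[ℂ] EuclideanSpace ℂ (Fin n)) μ → ‖μ‖ < 1) :
    ∃ k₀ : ℕ, TendstoLocallyUniformlyOn (fun k : ℕ => f^[k * k₀])
      (fun _ => p) atTop (Metric.ball 0 1) := by
  obtain ⟨m, hm⟩ := (fderiv ℂ g p).exists_norm_pow_lt_one heig
  have hp_closure : p ∈ closure (ball 0 1) := by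
    rw [closure_ball 0 one_ne_zero]
    exact mem_closedBall_zero_iff.2 hp.le
  obtain ⟨w, hw, hfw⟩ := exists_tendsto_iterate_of_norm_fderiv_pow_lt_one hfself hfg hp_closure
    (hUopen.mem_nhds hpU) (hg.differentiableAt (hUopen.mem_nhds hpU)) hgp hm
  refine ⟨m, tendstoLocallyUniformlyOn_ball_of_tendsto (fun _ => hf.iterate hfself _)
    (fun _ => hfself.iterate _) hp hw ?_⟩
  convert hfw using 2 with k
  rw [mul_comm, Function.iterate_mul]

/-- **Attracting boundary fixed point on the ball.**  Let `f : 𝔹ⁿ → 𝔹ⁿ` be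
holomorphic, holomorphic at `p ∈ ∂𝔹ⁿ` with `f(p) = p`.  If every eigenvalue of
`J_f(p)` has modulus `< 1`, then there is `k₀ ∈ ℕ` such that the iterates
`f^{k k₀}` converge locally uniformly on `𝔹ⁿ` to the constant map `p`. -/
theorem ball_attracting_boundary_fixed_point
    {n : ℕ} (hn : 1 ≤ n)
    -- `f` is a holomorphic self-map of the unit ball `𝔹ⁿ`
    (f : EuclideanSpace ℂ (Fin n) → EuclideanSpace ℂ (Fin n))
    (hf : DifferentiableOn ℂ f (Metric.ball 0 1))
    (hfself : MapsTo f (Metric.ball 0 1) (Metric.ball 0 1))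
    -- `f` is holomorphic at `p ∈ ∂𝔹ⁿ`: it extends holomorphically as `g` near `p`
    (p : EuclideanSpace ℂ (Fin n)) (hp : ‖p‖ = 1)
    (g : EuclideanSpace ℂ (Fin n) → EuclideanSpace ℂ (Fin n))
    (U : Set (EuclideanSpace ℂ (Fin n))) (hUopen : IsOpen U) (hpU : p ∈ U)
    (hg : DifferentiableOn ℂ g U) (hfg : EqOn f g (Metric.ball 0 1 ∩ U))
    (hgp : g p = p)
    -- all eigenvalues of `J_f(p)` have modulus strictly less than one
    (heig : ∀ μ : ℂ,
      Module.End.HasEigenvalue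
        ((fderiv ℂ g p : EuclideanSpace ℂ (Fin n) →L[ℂ] EuclideanSpace ℂ (Fin n)) :
          EuclideanSpace ℂ (Fin n) →ₗ[ℂ] EuclideanSpace ℂ (Fin n)) μ → ‖μ‖ < 1) :
    ∃ k₀ : ℕ, TendstoLocallyUniformlyOn (fun k : ℕ => f^[k * k₀])
      (fun _ => p) atTop (Metric.ball 0 1) :=
  ball_attracting_boundary_fixed_point_general f hf hfself p hp g U hUopen hpU hg hfg hgp heig
end
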